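/- arXiv:1512.03083 — 5 statements merged into one kernel-verified Lean document; each statement's English description precedes it below -/
import Mathlib

section
/- Let G be a connected, locally finite simple graph and fix a vertex x0. Suppose there exist real constants c, C > 0 and q > 1 such that for every vertex x and every natural number n one has gd(x, n) ≤ C·q^n, and for every natural number n one has gd(x0, n) ≥ c·q^n. Then every finitely supported function f from the vertex set of G to ℝ with f(x0) = 1 has Dirichlet energy D(f) ≥ c·(q − 1)/C. -/
open SimpleGraph
/-- Along a walk realizing distances from `x0` (i.e. `dist x0 a + length = dist x0 b`),
every dart increases the distance from `x0` by one. -/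
lemma geod_dart_dist {V : Type*} {G : SimpleGraph V} (hconn : G.Connected) (x0 : V) :
    ∀ {a b : V} (w : G.Walk a b), G.dist x0 a + w.length = G.dist x0 b →
      ∀ d ∈ w.darts, G.dist x0 d.snd = G.dist x0 d.fst + 1 := by
  intro a b w
  induction w with
  | nil => intro _ d hd; simp [SimpleGraph.Walk.darts] at hd
  | @cons a c b h p ih =>
    intro hlen d hd
    have t1 : G.dist x0 b ≤ G.dist x0 c + G.dist c b := hconn.dist_triangle
    have t2 : G.dist c b ≤ p.length := SimpleGraph.dist_le p
    have t3 : G.dist x0 c ≤ G.dist x0 a + 1 := by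
      have := hconn.dist_triangle (u := x0) (v := a) (w := c)
      have hac : G.dist a c ≤ 1 := by
        simpa using SimpleGraph.dist_le (SimpleGraph.Walk.cons h SimpleGraph.Walk.nil)
      omega
    have hlen' : G.dist x0 a + (p.length + 1) = G.dist x0 b := by
      simpa [SimpleGraph.Walk.length_cons] using hlen
    have hc : G.dist x0 c = G.dist x0 a + 1 ∧ G.dist x0 c + p.length = G.dist x0 b := by omega
    rw [SimpleGraph.Walk.darts_cons, List.mem_cons] at hd
    rcases hd with hd | hd
    · subst hd; simpa using hc.1
    · exact ih hc.2 d hd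

/-- Geometric sum along a geodesic-type walk. -/
lemma geod_dart_sum {V : Type*} {G : SimpleGraph V} (hconn : G.Connected) (x0 : V)
    {q : ℝ} (hq : 1 < q) (N : ℕ) :
    ∀ {a b : V} (w : G.Walk a b), G.dist x0 a + w.length = G.dist x0 b → G.dist x0 b ≤ N →
      (w.darts.map (fun d => q ^ (N - G.dist x0 d.snd))).sum ≤
        (q ^ (N - G.dist x0 a) - q ^ (N - G.dist x0 b)) / (q - 1) := by
  intro a b w
  induction w with
  | nil => intro _ _; simp
  | @cons a c b h p ih =>
    intro hlen hbN
    have t1 : G.dist x0 b ≤ G.dist x0 c + G.dist c b := hconn.dist_triangle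
    have t2 : G.dist c b ≤ p.length := SimpleGraph.dist_le p
    have t3 : G.dist x0 c ≤ G.dist x0 a + 1 := by
      have := hconn.dist_triangle (u := x0) (v := a) (w := c)
      have hac : G.dist a c ≤ 1 := by
        simpa using SimpleGraph.dist_le (SimpleGraph.Walk.cons h SimpleGraph.Walk.nil)
      omega
    have hlen' : G.dist x0 a + (p.length + 1) = G.dist x0 b := by
      simpa [SimpleGraph.Walk.length_cons] using hlen
    have hc : G.dist x0 c = G.dist x0 a + 1 ∧ G.dist x0 c + p.length = G.dist x0 b := by omega
    have hrec := ih hc.2 hbN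
    have hq1 : (0:ℝ) < q - 1 := by linarith
    have hexp : N - G.dist x0 a = (N - G.dist x0 c) + 1 := by omega
    simp only [SimpleGraph.Walk.darts_cons, List.map_cons, List.sum_cons]
    have hpow : q ^ (N - G.dist x0 a) = q ^ (N - G.dist x0 c) * q := by rw [hexp, pow_succ]
    have key : q ^ (N - G.dist x0 c) +
        (q ^ (N - G.dist x0 c) - q ^ (N - G.dist x0 b)) / (q - 1) =
        (q ^ (N - G.dist x0 c) * q - q ^ (N - G.dist x0 b)) / (q - 1) := by
      field_simp
      ring
    rw [hpow]
    linarith [key]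

/-- A vertex on a geodesic splits the length into the two distances. -/
lemma geod_support_dist {V : Type*} {G : SimpleGraph V} (hconn : G.Connected)
    {a b : V} (w : G.Walk a b) (hw : w.length = G.dist a b) {v : V}
    (hv : v ∈ w.support) : G.dist a v + G.dist v b = w.length := by
  classical
  have hspec := w.take_spec hv
  have hlen : (w.takeUntil v hv).length + (w.dropUntil v hv).length = w.length := by
    rw [← SimpleGraph.Walk.length_append, hspec]
  have t1 : G.dist a v ≤ (w.takeUntil v hv).length := SimpleGraph.dist_le _
  have t2 : G.dist v b ≤ (w.dropUntil v hv).length := SimpleGraph.dist_le _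
  have t3 : G.dist a b ≤ G.dist a v + G.dist v b := hconn.dist_triangle
  omega

lemma walk_telescope {V : Type*} {G : SimpleGraph V} (f : V → ℝ) :
    ∀ {a b : V} (w : G.Walk a b),
      (w.darts.map (fun d => f d.fst - f d.snd)).sum = f a - f b := by
  intro a b w
  induction w with
  | nil => simp
  | @cons a c b h p ih => simp [ih]

/-- The set of geodesics from `x0` (walks from `x0` whose length realizes the graph
distance to their terminal vertex) that pass through `x` with the portion from `x`
to the terminal vertex having length `n` (i.e. `x` lies on the geodesic at graph
distance `n` from the terminal endpoint). -/
def geodSet {V : Type*} (G : SimpleGraph V) (x0 x : V) (n : ℕ) :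
    Set (Σ t : V, G.Walk x0 t) :=
  {w | w.2.length = G.dist x0 w.1 ∧ x ∈ w.2.support ∧ G.dist x w.1 = n}

/-- The Dirichlet energy of a function on the vertices of a graph:
`D(f) = ∑_{{x,y} edge} (f x - f y)^2`, summed over unordered edges. -/
noncomputable def dirichletEnergy {V : Type*} (G : SimpleGraph V) (f : V → ℝ) : ℝ :=
  ∑ᶠ e ∈ G.edgeSet, Sym2.lift ⟨fun a b => (f a - f b) ^ 2, fun a b => by ring⟩ e

theorem dirichlet_energy_lower_bound {V : Type*} (G : SimpleGraph V)
    (hconn : G.Connected) (hlf : ∀ v : V, (G.neighborSet v).Finite) (x0 : V)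
    (c C q : ℝ) (hc : 0 < c) (hC : 0 < C) (hq : 1 < q)
    (hfin : ∀ (x : V) (n : ℕ), (geodSet G x0 x n).Finite)
    (hub : ∀ (x : V) (n : ℕ), ((geodSet G x0 x n).ncard : ℝ) ≤ C * q ^ n)
    (hlb : ∀ n : ℕ, c * q ^ n ≤ ((geodSet G x0 x0 n).ncard : ℝ))
    (f : V → ℝ) (hsupp : (Function.support f).Finite) (hf0 : f x0 = 1) :
    c * (q - 1) / C ≤ dirichletEnergy G f := by
  classical
  set g : Sym2 V → ℝ :=
    Sym2.lift ⟨fun a b => (f a - f b) ^ 2, fun a b => by ring⟩ with hg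
  have hgnonneg : ∀ e : Sym2 V, 0 ≤ g e := by
    intro e
    induction e using Sym2.ind with
    | _ a b => simp only [hg, Sym2.lift_mk]; positivity
  have hq1 : (0:ℝ) < q - 1 := by linarith
  -- choose N larger than all distances from x0 to the support of f
  set N : ℕ := hsupp.toFinset.sup (G.dist x0) + 1 with hN
  have hfar : ∀ t : V, G.dist x0 t = N → f t = 0 := by
    intro t ht
    by_contra h
    have hmem : t ∈ hsupp.toFinset := hsupp.mem_toFinset.2 h
    have := Finset.le_sup (f := G.dist x0) hmem
    omega
  -- the finset of geodesics of length N
  set Γ : Finset (Σ t : V, G.Walk x0 t) := (hfin x0 N).toFinset with hΓ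
  have hΓmem : ∀ γ ∈ Γ, γ.2.length = G.dist x0 γ.1 ∧ G.dist x0 γ.1 = N := by
    intro γ hγ
    rw [hΓ, Set.Finite.mem_toFinset] at hγ
    obtain ⟨h1, _, h3⟩ := hγ
    exact ⟨h1, by simpa using h3⟩
  have hΓcard : c * q ^ N ≤ (Γ.card : ℝ) := by
    have := hlb N
    rwa [Set.ncard_eq_toFinset_card _ (hfin x0 N)] at this
  have hqN : (0:ℝ) < q ^ N := by positivity
  have hcardpos : (0:ℝ) < (Γ.card : ℝ) := lt_of_lt_of_le (by positivity) hΓcard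
  have hnodup : ∀ γ ∈ Γ, γ.2.darts.Nodup := by
    intro γ hγ
    exact SimpleGraph.Walk.darts_nodup_of_support_nodup
      (γ.2.isPath_of_length_eq_dist (hΓmem γ hγ).1).support_nodup
  set Df : Finset G.Dart := Γ.biUnion (fun γ => γ.2.darts.toFinset) with hDf
  set M : G.Dart → ℕ :=
    fun d => (Γ.filter (fun γ => d ∈ γ.2.darts.toFinset)).card with hM
  set k : G.Dart → ℕ := fun d => N - G.dist x0 d.snd with hk
  -- double counting
  have hswap : ∀ u : G.Dart → ℝ,
      ∑ γ ∈ Γ, (γ.2.darts.map u).sum = ∑ d ∈ Df, (M d : ℝ) * u d := by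
    intro u
    calc ∑ γ ∈ Γ, (γ.2.darts.map u).sum
        = ∑ γ ∈ Γ, ∑ d ∈ γ.2.darts.toFinset, u d := by
          refine Finset.sum_congr rfl fun γ hγ => ?_
          exact (List.sum_toFinset u (hnodup γ hγ)).symm
      _ = ∑ γ ∈ Γ, ∑ d ∈ Df, if d ∈ γ.2.darts.toFinset then u d else 0 := by
          refine Finset.sum_congr rfl fun γ hγ => ?_
          rw [Finset.sum_ite_mem,
            Finset.inter_eq_right.2 (fun d hd => Finset.mem_biUnion.2 ⟨γ, hγ, hd⟩)]
      _ = ∑ d ∈ Df, ∑ γ ∈ Γ, if d ∈ γ.2.darts.toFinset then u d else 0 :=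
          Finset.sum_comm
      _ = ∑ d ∈ Df, (M d : ℝ) * u d := by
          refine Finset.sum_congr rfl fun d _ => ?_
          rw [← Finset.sum_filter, Finset.sum_const, nsmul_eq_mul, hM]
  -- every dart of a geodesic increases distance from x0
  have horient : ∀ d ∈ Df, G.dist x0 d.snd = G.dist x0 d.fst + 1 := by
    intro d hd
    obtain ⟨γ, hγ, hdγ⟩ := Finset.mem_biUnion.1 hd
    rw [List.mem_toFinset] at hdγ
    refine geod_dart_dist hconn x0 γ.2 ?_ d hdγ
    simp [SimpleGraph.dist_self, (hΓmem γ hγ).1]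
  have hsplit : ∀ d : G.Dart, ∀ γ ∈ Γ, d ∈ γ.2.darts →
      G.dist x0 d.snd + G.dist d.snd γ.1 = N := by
    intro d γ hγ hdγ
    obtain ⟨h1, h2⟩ := hΓmem γ hγ
    have := geod_support_dist hconn γ.2 h1 (γ.2.dart_snd_mem_support_of_mem_darts hdγ)
    omega
  -- M d is bounded by the geodesic count through d.snd
  have hMle : ∀ d ∈ Df, (M d : ℝ) ≤ C * q ^ (k d) := by
    intro d _
    have hsub : Γ.filter (fun γ => d ∈ γ.2.darts.toFinset) ⊆
        (hfin d.snd (k d)).toFinset := by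
      intro γ hγ'
      rw [Finset.mem_filter] at hγ'
      obtain ⟨hγ, hdγ⟩ := hγ'
      rw [List.mem_toFinset] at hdγ
      rw [Set.Finite.mem_toFinset]
      refine ⟨(hΓmem γ hγ).1, γ.2.dart_snd_mem_support_of_mem_darts hdγ, ?_⟩
      have := hsplit d γ hγ hdγ
      simp only [hk]
      omega
    calc (M d : ℝ) ≤ ((hfin d.snd (k d)).toFinset.card : ℝ) := by
          exact_mod_cast Finset.card_le_card hsub
      _ = ((geodSet G x0 d.snd (k d)).ncard : ℝ) := by
          rw [Set.ncard_eq_toFinset_card _ (hfin _ _)]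
      _ ≤ C * q ^ (k d) := hub _ _
  -- equation: sum of M * increments equals number of geodesics
  have heq1 : ∑ d ∈ Df, (M d : ℝ) * (f d.fst - f d.snd) = (Γ.card : ℝ) := by
    rw [← hswap]
    have h1 : ∀ γ ∈ Γ, (γ.2.darts.map (fun d => f d.fst - f d.snd)).sum = 1 := by
      intro γ hγ
      obtain ⟨_, h2⟩ := hΓmem γ hγ
      rw [walk_telescope f γ.2, hf0, hfar γ.1 h2, sub_zero]
    rw [Finset.sum_congr rfl h1, Finset.sum_const, nsmul_eq_mul, mul_one]
  -- bound on the sum of squares of M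
  have hbound2 : ∑ d ∈ Df, ((M d : ℝ)) ^ 2 ≤
      C * ((Γ.card : ℝ) * (q ^ N / (q - 1))) := by
    have step1 : ∑ d ∈ Df, ((M d : ℝ)) ^ 2 ≤
        ∑ d ∈ Df, (M d : ℝ) * (C * q ^ (k d)) := by
      refine Finset.sum_le_sum fun d hd => ?_
      rw [sq]
      exact mul_le_mul_of_nonneg_left (hMle d hd) (Nat.cast_nonneg _)
    have step2 : ∑ d ∈ Df, (M d : ℝ) * (C * q ^ (k d)) =
        C * ∑ γ ∈ Γ, (γ.2.darts.map (fun d => q ^ (k d))).sum := by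
      rw [hswap (fun d => q ^ (k d)), Finset.mul_sum]
      exact Finset.sum_congr rfl fun d _ => by ring
    have step3 : ∀ γ ∈ Γ, (γ.2.darts.map (fun d => q ^ (k d))).sum ≤
        q ^ N / (q - 1) := by
      intro γ hγ
      obtain ⟨h1, h2⟩ := hΓmem γ hγ
      have hh : G.dist x0 x0 + γ.2.length = G.dist x0 γ.1 := by
        simp [SimpleGraph.dist_self, h1]
      have hsum := geod_dart_sum hconn x0 hq N γ.2 hh (le_of_eq h2)
      rw [SimpleGraph.dist_self, h2, Nat.sub_zero, Nat.sub_self, pow_zero] at hsum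
      have : (q ^ N - 1) / (q - 1) ≤ q ^ N / (q - 1) := by
        gcongr
        linarith
      calc (γ.2.darts.map (fun d => q ^ (k d))).sum
          = (γ.2.darts.map (fun d => q ^ (N - G.dist x0 d.snd))).sum := by rw [hk]
        _ ≤ (q ^ N - 1) / (q - 1) := hsum
        _ ≤ q ^ N / (q - 1) := this
    have step4 : ∑ γ ∈ Γ, (γ.2.darts.map (fun d => q ^ (k d))).sum ≤
        (Γ.card : ℝ) * (q ^ N / (q - 1)) := by
      have := Finset.sum_le_card_nsmul Γ _ _ step3
      rwa [nsmul_eq_mul] at this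
    calc ∑ d ∈ Df, ((M d : ℝ)) ^ 2 ≤ ∑ d ∈ Df, (M d : ℝ) * (C * q ^ (k d)) := step1
      _ = C * ∑ γ ∈ Γ, (γ.2.darts.map (fun d => q ^ (k d))).sum := step2
      _ ≤ C * ((Γ.card : ℝ) * (q ^ N / (q - 1))) :=
          mul_le_mul_of_nonneg_left step4 hC.le
  -- the edge map is injective on darts of geodesics
  have hinj : ∀ d1 ∈ Df, ∀ d2 ∈ Df, d1.edge = d2.edge → d1 = d2 := by
    intro d1 h1 d2 h2 he
    rcases (SimpleGraph.dart_edge_eq_iff d1 d2).1 he with h | h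
    · exact h
    · exfalso
      have o1 := horient d1 h1
      have o2 := horient d2 h2
      rw [h] at o1
      simp only [SimpleGraph.Dart.symm_toProd, Prod.snd_swap, Prod.fst_swap] at o1
      omega
  -- bound the sum of squared increments by the Dirichlet energy
  have hbound3 : ∑ d ∈ Df, (f d.fst - f d.snd) ^ 2 ≤ dirichletEnergy G f := by
    have himg : ∑ e ∈ Df.image SimpleGraph.Dart.edge, g e =
        ∑ d ∈ Df, (f d.fst - f d.snd) ^ 2 := by
      rw [Finset.sum_image hinj]
      refine Finset.sum_congr rfl fun d _ => ?_
      rcases d with ⟨⟨a, b⟩, hab⟩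
      simp [hg, SimpleGraph.Dart.edge]
    have hUfin : (G.edgeSet ∩ Function.support g).Finite := by
      apply Set.Finite.subset
        (Set.Finite.biUnion hsupp (fun v _ => ((hlf v).image (fun u => s(v, u)))))
      rintro e ⟨hee, hge⟩
      induction e using Sym2.ind with
      | _ a b =>
        have hadj : G.Adj a b := hee
        have hfab : f a ≠ f b := by
          intro hfe
          apply hge
          simp [hg, hfe]
        by_cases ha : f a = 0
        · have hb : f b ≠ 0 := fun hb => hfab (by rw [ha, hb])
          exact Set.mem_biUnion hb ⟨a, hadj.symm, Sym2.eq_swap⟩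
        · exact Set.mem_biUnion ha ⟨b, hadj, rfl⟩
    have hW : dirichletEnergy G f =
        ∑ e ∈ (Df.image SimpleGraph.Dart.edge) ∪ hUfin.toFinset, g e := by
      have hde : dirichletEnergy G f = ∑ᶠ e ∈ G.edgeSet, g e := rfl
      rw [hde]
      apply finsum_mem_eq_sum_of_subset
      · intro e he
        simp only [Finset.coe_union, Set.mem_union, Finset.mem_coe,
          Set.Finite.mem_toFinset]
        exact Or.inr he
      · intro e he
        simp only [Finset.coe_union, Set.mem_union, Finset.mem_coe,
          Finset.mem_image, Set.Finite.mem_toFinset] at he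
        rcases he with ⟨d, _, rfl⟩ | he
        · exact d.edge_mem
        · exact he.1
    rw [hW, ← himg]
    exact Finset.sum_le_sum_of_subset_of_nonneg Finset.subset_union_left
      (fun e _ _ => hgnonneg e)
  -- Cauchy–Schwarz and conclusion
  have hcs := Finset.sum_mul_sq_le_sq_mul_sq Df (fun d => (M d : ℝ))
    (fun d => f d.fst - f d.snd)
  rw [heq1] at hcs
  have hΔnn : (0:ℝ) ≤ ∑ d ∈ Df, (f d.fst - f d.snd) ^ 2 :=
    Finset.sum_nonneg fun d _ => sq_nonneg _
  have hBnn : (0:ℝ) ≤ C * ((Γ.card : ℝ) * (q ^ N / (q - 1))) := by positivity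
  have hstep : (Γ.card : ℝ) ^ 2 ≤
      (C * ((Γ.card : ℝ) * (q ^ N / (q - 1)))) * dirichletEnergy G f :=
    le_trans hcs (mul_le_mul hbound2 hbound3 hΔnn hBnn)
  set D := dirichletEnergy G f with hD
  have h2 : (Γ.card : ℝ) ≤ C * (q ^ N / (q - 1)) * D := by
    nlinarith [hstep, hcardpos]
  have h3 : c * q ^ N * (q - 1) ≤ C * q ^ N * D := by
    calc c * q ^ N * (q - 1) ≤ (C * (q ^ N / (q - 1)) * D) * (q - 1) := by
          have := le_trans hΓcard h2
          nlinarith [this]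
      _ = C * q ^ N * D := by field_simp
  have h4 : c * (q - 1) ≤ C * D := by
    have h5 : (c * (q - 1)) * q ^ N ≤ (C * D) * q ^ N := by
      calc (c * (q - 1)) * q ^ N = c * q ^ N * (q - 1) := by ring
        _ ≤ C * q ^ N * D := h3
        _ = (C * D) * q ^ N := by ring
    exact le_of_mul_le_mul_right h5 hqN
  rw [div_le_iff₀ hC]
  linarith
end

section
/- Let G be a connected, locally finite simple graph and fix a vertex x0. Suppose there exist real constants c, C > 0 and q > 1 such that for every vertex x and every natural number n one has gd(x, n) ≤ C·q^n, and for every natural number n one has gd(x0, n) ≥ c·q^n. Then the capacity of x0 is positive: the infimum of the Dirichlet energies D(f), taken over all finitely supported functions f from the vertex set of G to ℝ with f(x0) = 1, is strictly positive. -/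
open SimpleGraph

private lemma cap_geom_le {r : ℝ} (h0 : 0 ≤ r) (h1 : r < 1) (n : ℕ) :
    ∑ i ∈ Finset.range n, r ^ i ≤ 1 / (1 - r) := by
  have h1' : (0:ℝ) < 1 - r := by linarith
  rw [geom_sum_eq h1.ne n]
  have h2 : (r ^ n - 1) / (r - 1) = (1 - r ^ n) / (1 - r) := by
    rw [div_eq_div_iff (by linarith) (by linarith)]; ring
  rw [h2, div_le_div_iff₀ h1' h1']
  nlinarith [pow_nonneg h0 n]

private lemma dist_start_getVert_le {V : Type*} {G : SimpleGraph V} (hconn : G.Connected)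
    {u v : V} (w : G.Walk u v) (i : ℕ) : G.dist u (w.getVert i) ≤ i := by
  induction w generalizing i with
  | nil => rw [Walk.getVert_of_length_le _ (Nat.zero_le i)]; simp [SimpleGraph.dist_self]
  | @cons u b v h p ih =>
    cases i with
    | zero => simp [Walk.getVert_zero]
    | succ i =>
      rw [Walk.getVert_cons_succ]
      calc G.dist u (p.getVert i) ≤ G.dist u b + G.dist b (p.getVert i) := hconn.dist_triangle
        _ ≤ 1 + i := by
            have h1 : G.dist u b ≤ 1 := by
              simpa using SimpleGraph.dist_le (Walk.cons h Walk.nil)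
            exact add_le_add h1 (ih i)
        _ = i + 1 := by omega

private lemma dist_getVert_end_le {V : Type*} {G : SimpleGraph V}
    {u v : V} (w : G.Walk u v) (i : ℕ) : G.dist (w.getVert i) v ≤ w.length - i := by
  induction w generalizing i with
  | nil => rw [Walk.getVert_of_length_le _ (Nat.zero_le i)]; simp [SimpleGraph.dist_self]
  | @cons u b v h p ih =>
    cases i with
    | zero =>
      rw [Walk.getVert_zero]
      simpa using SimpleGraph.dist_le (Walk.cons h p)
    | succ i =>
      rw [Walk.getVert_cons_succ]
      simpa [Walk.length_cons, Nat.succ_sub_succ] using ih i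

private noncomputable def Qe {V : Type*} (f : V → ℝ) : Sym2 V → ℝ :=
  Sym2.lift ⟨fun a b => (f a - f b) ^ 2, fun a b => by ring⟩

private lemma dirichletEnergy_eq {V : Type*} (G : SimpleGraph V) (f : V → ℝ) :
    dirichletEnergy G f = ∑ᶠ e ∈ G.edgeSet, Qe f e := rfl

private lemma Qe_mk {V : Type*} (f : V → ℝ) (x y : V) : Qe f s(x, y) = (f x - f y) ^ 2 :=
  Sym2.lift_mk _ _ _

private lemma Qe_nonneg {V : Type*} (f : V → ℝ) (e : Sym2 V) : 0 ≤ Qe f e := by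
  induction e using Sym2.ind with
  | _ x y => rw [Qe_mk]; positivity

theorem capacity_pos {V : Type*} (G : SimpleGraph V)
    (hconn : G.Connected) (hlf : ∀ v : V, (G.neighborSet v).Finite) (x0 : V)
    (c C q : ℝ) (hc : 0 < c) (hC : 0 < C) (hq : 1 < q)
    (hfin : ∀ (x : V) (n : ℕ), (geodSet G x0 x n).Finite)
    (hub : ∀ (x : V) (n : ℕ), ((geodSet G x0 x n).ncard : ℝ) ≤ C * q ^ n)
    (hlb : ∀ n : ℕ, c * q ^ n ≤ ((geodSet G x0 x0 n).ncard : ℝ)) :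
    0 < sInf {E : ℝ | ∃ f : V → ℝ,
      (Function.support f).Finite ∧ f x0 = 1 ∧ E = dirichletEnergy G f} := by
  classical
  have hq0 : (0:ℝ) < q := by linarith
  set r : ℝ := (q + 1) / (2 * q) with hr_def
  have hr0 : 0 < r := by positivity
  have hr1 : r < 1 := by
    rw [hr_def, div_lt_one (by linarith)]; linarith
  have hrq_eq : r * q = (q + 1) / 2 := by
    rw [hr_def]; field_simp
  have hrq : 1 < r * q := by rw [hrq_eq]; linarith
  set Sg : ℝ := 1 / (1 - r) with hSg_def
  have hSg : 0 < Sg := by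
    have : (0:ℝ) < 1 - r := by linarith
    positivity
  have hTg0 : (0:ℝ) < 1 - 1 / (r * q) := by
    have h1 : 1 / (r * q) < 1 := by
      rw [div_lt_one (by linarith)]; exact hrq
    linarith
  set Tg : ℝ := 1 / (1 - 1 / (r * q)) with hTg_def
  have hTg : 0 < Tg := by positivity
  set ε : ℝ := c / (2 * C * Sg * Tg) with hε_def
  have hε : 0 < ε := by positivity
  -- Main estimate: every admissible f has energy at least ε.
  have key : ∀ f : V → ℝ, (Function.support f).Finite → f x0 = 1 →
      ε ≤ dirichletEnergy G f := by
    intro f hsupp hf1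
    -- finiteness of the relevant edges
    have hA : ({p : V × V | G.Adj p.1 p.2 ∧ (f p.1 ≠ 0 ∨ f p.2 ≠ 0)}).Finite := by
      apply Set.Finite.subset ((hsupp.biUnion (fun x _ => (Set.finite_singleton x).prod (hlf x))).union
        (hsupp.biUnion (fun y _ => (hlf y).prod (Set.finite_singleton y))))
      rintro ⟨x, y⟩ ⟨hadj, hxy⟩
      rcases hxy with hx | hy
      · exact Or.inl (Set.mem_biUnion hx ⟨rfl, hadj⟩)
      · exact Or.inr (Set.mem_biUnion hy ⟨hadj.symm, rfl⟩)
    have hQfin : (G.edgeSet ∩ Function.support (Qe f)).Finite := by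
      apply Set.Finite.subset (hA.image Sym2.mk.uncurry)
      have hsub : ∀ x y : V, s(x, y) ∈ G.edgeSet ∩ Function.support (Qe f) →
          s(x, y) ∈ Sym2.mk.uncurry '' {p : V × V | G.Adj p.1 p.2 ∧ (f p.1 ≠ 0 ∨ f p.2 ≠ 0)} := by
        rintro x y ⟨he, hQe⟩
        have hadj : G.Adj x y := G.mem_edgeSet.1 he
        have hne : f x ≠ f y := by
          intro hxy
          apply hQe
          rw [Function.mem_support] at hQe
          simp [Qe_mk, hxy]
        have hor : f x ≠ 0 ∨ f y ≠ 0 := by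
          by_contra hcon
          push_neg at hcon
          exact hne (hcon.1.trans hcon.2.symm)
        exact ⟨(x, y), ⟨hadj, hor⟩, rfl⟩
      exact fun e => Sym2.ind hsub e
    have hD_sum : dirichletEnergy G f = ∑ e ∈ hQfin.toFinset, Qe f e := by
      rw [dirichletEnergy_eq]
      exact finsum_mem_eq_sum _ hQfin
    have hkeyT : ∀ T : Finset (Sym2 V), ↑T ⊆ G.edgeSet →
        ∑ e ∈ T, Qe f e ≤ dirichletEnergy G f := by
      intro T hT
      rw [hD_sum]
      rw [← Finset.sum_filter_ne_zero T]
      apply Finset.sum_le_sum_of_subset_of_nonneg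
      · intro e he
        rw [Finset.mem_filter] at he
        rw [Set.Finite.mem_toFinset]
        exact ⟨hT he.1, he.2⟩
      · exact fun e _ _ => Qe_nonneg f e
    -- choice of n
    set n : ℕ := hsupp.toFinset.sup (G.dist x0) + 1 with hn_def
    have hfzero : ∀ t : V, G.dist x0 t = n → f t = 0 := by
      intro t ht
      by_contra hft
      have h1 : t ∈ hsupp.toFinset := hsupp.mem_toFinset.2 hft
      have h2 := Finset.le_sup (f := G.dist x0) h1
      omega
    set M : Finset (Σ t : V, G.Walk x0 t) := (hfin x0 n).toFinset with hM_def
    have hMcard : c * q ^ n ≤ (M.card : ℝ) := by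
      have h := hlb n
      rwa [Set.ncard_eq_toFinset_card _ (hfin x0 n)] at h
    have hMmem : ∀ γ ∈ M, γ.2.length = n ∧ G.dist x0 γ.1 = n ∧ γ.2.length = G.dist x0 γ.1 := by
      intro γ hγ
      rw [hM_def, Set.Finite.mem_toFinset] at hγ
      obtain ⟨h1, _, h3⟩ := hγ
      exact ⟨h1.trans h3, h3, h1⟩
    set π : ℕ → (Σ t : V, G.Walk x0 t) → V × V :=
      fun i γ => (γ.2.getVert i, γ.2.getVert (i + 1)) with hπ_def
    set g : V × V → ℝ := fun p => (f p.1 - f p.2) ^ 2 with hg_def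
    have hgnn : ∀ p, 0 ≤ g p := fun p => sq_nonneg _
    set P : Finset (V × V) := (Finset.range n).biUnion (fun i => M.image (π i)) with hP_def
    set Esym : ℝ := ∑ p ∈ P, g p with hE_def
    have hPadj : ∀ p ∈ P, G.Adj p.1 p.2 := by
      intro p hp
      rw [hP_def, Finset.mem_biUnion] at hp
      obtain ⟨i, hi, hp⟩ := hp
      rw [Finset.mem_image] at hp
      obtain ⟨γ, hγ, rfl⟩ := hp
      have hlen := (hMmem γ hγ).1
      exact γ.2.adj_getVert_succ (by rw [hlen]; exact Finset.mem_range.1 hi)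
    -- Cauchy–Schwarz along each geodesic
    have hCS : ∀ γ ∈ M, 1 ≤ Sg * ∑ i ∈ Finset.range n, g (π i γ) / r ^ i := by
      intro γ hγ
      obtain ⟨hlen, hdist, _⟩ := hMmem γ hγ
      have hft : f γ.1 = 0 := hfzero γ.1 hdist
      have htel : ∑ i ∈ Finset.range n, (f (γ.2.getVert i) - f (γ.2.getVert (i + 1))) = 1 := by
        rw [Finset.sum_range_sub' (fun i => f (γ.2.getVert i)) n]
        rw [Walk.getVert_zero, ← hlen, Walk.getVert_length, hf1, hft, sub_zero]
      have hsq : ∀ i : ℕ, Real.sqrt (r ^ i) ≠ 0 := fun i =>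
        Real.sqrt_ne_zero'.2 (pow_pos hr0 i)
      have hcs := Finset.sum_mul_sq_le_sq_mul_sq (Finset.range n)
        (fun i => Real.sqrt (r ^ i))
        (fun i => (f (γ.2.getVert i) - f (γ.2.getVert (i + 1))) / Real.sqrt (r ^ i))
      have h1 : ∑ i ∈ Finset.range n,
          Real.sqrt (r ^ i) * ((f (γ.2.getVert i) - f (γ.2.getVert (i + 1))) / Real.sqrt (r ^ i))
          = 1 := by
        rw [← htel]
        apply Finset.sum_congr rfl
        intro i _
        rw [mul_comm, div_mul_cancel₀ _ (hsq i)]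
      have h2 : ∀ i ∈ Finset.range n, (Real.sqrt (r ^ i)) ^ 2 = r ^ i := fun i _ =>
        Real.sq_sqrt (pow_nonneg hr0.le i)
      have h3 : ∀ i ∈ Finset.range n,
          ((f (γ.2.getVert i) - f (γ.2.getVert (i + 1))) / Real.sqrt (r ^ i)) ^ 2
          = g (π i γ) / r ^ i := by
        intro i _
        rw [div_pow, Real.sq_sqrt (pow_nonneg hr0.le i)]
      rw [h1, Finset.sum_congr rfl h2, Finset.sum_congr rfl h3, one_pow] at hcs
      have hXnn : 0 ≤ ∑ i ∈ Finset.range n, g (π i γ) / r ^ i :=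
        Finset.sum_nonneg fun i _ => div_nonneg (hgnn _) (pow_nonneg hr0.le i)
      calc (1:ℝ) ≤ (∑ i ∈ Finset.range n, r ^ i) * ∑ i ∈ Finset.range n, g (π i γ) / r ^ i := hcs
        _ ≤ Sg * ∑ i ∈ Finset.range n, g (π i γ) / r ^ i :=
            mul_le_mul_of_nonneg_right (cap_geom_le hr0.le hr1 n) hXnn
    -- counting bound for each level i
    have hcount : ∀ i ∈ Finset.range n,
        ∑ γ ∈ M, g (π i γ) ≤ C * q ^ (n - i) * Esym := by
      intro i hi
      have hi' := Finset.mem_range.1 hi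
      have hmaps : ∀ γ ∈ M, π i γ ∈ M.image (π i) := fun γ hγ =>
        Finset.mem_image_of_mem _ hγ
      rw [← Finset.sum_fiberwise_of_maps_to hmaps (fun γ => g (π i γ))]
      have hinner : ∀ p ∈ M.image (π i),
          ∑ γ ∈ M.filter (fun γ => π i γ = p), g (π i γ) ≤ C * q ^ (n - i) * g p := by
        intro p hp
        have hsum_eq : ∑ γ ∈ M.filter (fun γ => π i γ = p), g (π i γ)
            = ((M.filter (fun γ => π i γ = p)).card : ℝ) * g p := by
          rw [Finset.sum_congr rfl (fun γ hγ => by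
            rw [(Finset.mem_filter.1 hγ).2])]
          rw [Finset.sum_const, nsmul_eq_mul]
        rw [hsum_eq]
        have hsubgeod : ↑(M.filter (fun γ => π i γ = p)) ⊆ geodSet G x0 p.1 (n - i) := by
          intro γ hγ
          rw [Finset.mem_coe, Finset.mem_filter] at hγ
          obtain ⟨hγM, hπγ⟩ := hγ
          obtain ⟨hlen, hdist, hgeo⟩ := hMmem γ hγM
          have hp1 : p.1 = γ.2.getVert i := by rw [← hπγ]
          refine ⟨hgeo, ?_, ?_⟩
          · rw [hp1]
            exact Walk.mem_support_iff_exists_getVert.2 ⟨i, rfl, by omega⟩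
          · rw [hp1]
            have hle : G.dist (γ.2.getVert i) γ.1 ≤ n - i := by
              have := dist_getVert_end_le γ.2 i
              rwa [hlen] at this
            have hge : n - i ≤ G.dist (γ.2.getVert i) γ.1 := by
              have h1 := dist_start_getVert_le hconn γ.2 i
              have h2 := hconn.dist_triangle (u := x0) (v := γ.2.getVert i) (w := γ.1)
              omega
            omega
        have hcard : ((M.filter (fun γ => π i γ = p)).card : ℝ) ≤ C * q ^ (n - i) := by
          have h1 : (M.filter (fun γ => π i γ = p)).card ≤ (geodSet G x0 p.1 (n - i)).ncard := by
            rw [← Set.ncard_coe_finset]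
            exact Set.ncard_le_ncard hsubgeod (hfin _ _)
          exact le_trans (Nat.cast_le.2 h1) (hub p.1 (n - i))
        exact mul_le_mul_of_nonneg_right hcard (hgnn p)
      calc ∑ p ∈ M.image (π i), ∑ γ ∈ M.filter (fun γ => π i γ = p), g (π i γ)
          ≤ ∑ p ∈ M.image (π i), C * q ^ (n - i) * g p := Finset.sum_le_sum hinner
        _ = C * q ^ (n - i) * ∑ p ∈ M.image (π i), g p := by rw [Finset.mul_sum]
        _ ≤ C * q ^ (n - i) * Esym := by
            apply mul_le_mul_of_nonneg_left _ (by positivity)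
            apply Finset.sum_le_sum_of_subset_of_nonneg
            · intro p hp
              rw [hP_def, Finset.mem_biUnion]
              exact ⟨i, hi, hp⟩
            · exact fun p _ _ => hgnn p
    -- combine
    have hEnn : 0 ≤ Esym := Finset.sum_nonneg fun p _ => hgnn p
    have hchain : (M.card : ℝ) ≤ Sg * (C * Esym * (q ^ n * Tg)) := by
      have step1 : (M.card : ℝ) ≤ Sg * ∑ γ ∈ M, ∑ i ∈ Finset.range n, g (π i γ) / r ^ i := by
        calc (M.card : ℝ) = ∑ _γ ∈ M, (1:ℝ) := by rw [Finset.sum_const, nsmul_eq_mul, mul_one]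
          _ ≤ ∑ γ ∈ M, Sg * ∑ i ∈ Finset.range n, g (π i γ) / r ^ i := Finset.sum_le_sum hCS
          _ = Sg * ∑ γ ∈ M, ∑ i ∈ Finset.range n, g (π i γ) / r ^ i := by rw [Finset.mul_sum]
      have step2 : ∑ γ ∈ M, ∑ i ∈ Finset.range n, g (π i γ) / r ^ i
          ≤ ∑ i ∈ Finset.range n, (C * q ^ (n - i) * Esym) / r ^ i := by
        rw [Finset.sum_comm]
        apply Finset.sum_le_sum
        intro i hi
        rw [← Finset.sum_div]
        exact div_le_div_of_nonneg_right (hcount i hi) (pow_pos hr0 i).le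
      have step3 : ∀ i ∈ Finset.range n,
          (C * q ^ (n - i) * Esym) / r ^ i = (C * Esym * q ^ n) * (1 / (r * q)) ^ i := by
        intro i hi
        have hi' := Finset.mem_range.1 hi
        have hqpow : q ^ (n - i) * q ^ i = q ^ n := by
          rw [← pow_add]; congr 1; omega
        have hrpow : (r:ℝ) ^ i ≠ 0 := (pow_pos hr0 i).ne'
        have hqpow' : (q:ℝ) ^ i ≠ 0 := (pow_pos hq0 i).ne'
        have hmulpow : (1 / (r * q)) ^ i = 1 / (r ^ i * q ^ i) := by
          rw [div_pow, one_pow, mul_pow]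
        rw [hmulpow, mul_one_div, div_eq_div_iff hrpow (by positivity)]
        linear_combination (C * Esym * r ^ i) * hqpow
      calc (M.card : ℝ)
          ≤ Sg * ∑ γ ∈ M, ∑ i ∈ Finset.range n, g (π i γ) / r ^ i := step1
        _ ≤ Sg * ∑ i ∈ Finset.range n, (C * q ^ (n - i) * Esym) / r ^ i :=
            mul_le_mul_of_nonneg_left step2 hSg.le
        _ = Sg * ((C * Esym * q ^ n) * ∑ i ∈ Finset.range n, (1 / (r * q)) ^ i) := by
            rw [Finset.sum_congr rfl step3, ← Finset.mul_sum]
        _ ≤ Sg * ((C * Esym * q ^ n) * Tg) := by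
            apply mul_le_mul_of_nonneg_left _ hSg.le
            apply mul_le_mul_of_nonneg_left _
              (mul_nonneg (mul_nonneg hC.le hEnn) (pow_nonneg hq0.le n))
            have h0' : (0:ℝ) ≤ 1 / (r * q) := by positivity
            have h1' : 1 / (r * q) < 1 := by
              rw [div_lt_one (by positivity)]; exact hrq
            exact cap_geom_le h0' h1' n
        _ = Sg * (C * Esym * (q ^ n * Tg)) := by ring
    have hqn : (0:ℝ) < q ^ n := pow_pos hq0 n
    have hEsym_lb : c ≤ Sg * C * Tg * Esym := by
      have h2 : c * q ^ n ≤ (Sg * C * Tg * Esym) * q ^ n := by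
        calc c * q ^ n ≤ (M.card : ℝ) := hMcard
          _ ≤ Sg * (C * Esym * (q ^ n * Tg)) := hchain
          _ = (Sg * C * Tg * Esym) * q ^ n := by ring
      exact le_of_mul_le_mul_right h2 hqn
    -- compare the symmetrized sum with the Dirichlet energy
    have hE2 : Esym ≤ 2 * dirichletEnergy G f := by
      have hmaps : ∀ p ∈ P, Sym2.mk.uncurry p ∈ P.image Sym2.mk.uncurry := fun p hp =>
        Finset.mem_image_of_mem _ hp
      have hIsub : ↑(P.image Sym2.mk.uncurry) ⊆ G.edgeSet := by
        intro e he
        rw [Finset.mem_coe, Finset.mem_image] at he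
        obtain ⟨p, hp, rfl⟩ := he
        exact G.mem_edgeSet.2 (hPadj p hp)
      have hinner : ∀ e ∈ P.image Sym2.mk.uncurry,
          ∑ p ∈ P.filter (fun p => Sym2.mk.uncurry p = e), g p ≤ 2 * Qe f e := by
        intro e he
        obtain ⟨p₀, hp₀, rfl⟩ := Finset.mem_image.1 he
        have hgQ : ∀ p ∈ P.filter (fun p => Sym2.mk.uncurry p = Sym2.mk.uncurry p₀),
            g p = Qe f (Sym2.mk.uncurry p₀) := by
          intro p hp
          rw [← (Finset.mem_filter.1 hp).2]
          exact (Qe_mk f p.1 p.2).symm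
        rw [Finset.sum_congr rfl hgQ, Finset.sum_const, nsmul_eq_mul]
        have hcard2 : (P.filter (fun p => Sym2.mk.uncurry p = Sym2.mk.uncurry p₀)).card ≤ 2 := by
          have hs : P.filter (fun p => Sym2.mk.uncurry p = Sym2.mk.uncurry p₀) ⊆ {p₀, p₀.swap} := by
            intro p hp
            rcases Sym2.mk_eq_mk_iff.1 (Finset.mem_filter.1 hp).2 with h | h
            · simp [h]
            · simp [h]
          calc (P.filter (fun p => Sym2.mk.uncurry p = Sym2.mk.uncurry p₀)).card
              ≤ ({p₀, p₀.swap} : Finset (V × V)).card := Finset.card_le_card hs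
            _ ≤ 2 := (Finset.card_insert_le _ _).trans (by simp)
        apply mul_le_mul_of_nonneg_right _ (Qe_nonneg f _)
        exact_mod_cast hcard2
      calc Esym = ∑ e ∈ P.image Sym2.mk.uncurry, ∑ p ∈ P.filter (fun p => Sym2.mk.uncurry p = e), g p :=
            (Finset.sum_fiberwise_of_maps_to hmaps g).symm
        _ ≤ ∑ e ∈ P.image Sym2.mk.uncurry, 2 * Qe f e := Finset.sum_le_sum hinner
        _ = 2 * ∑ e ∈ P.image Sym2.mk.uncurry, Qe f e := by rw [Finset.mul_sum]
        _ ≤ 2 * dirichletEnergy G f := by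
            apply mul_le_mul_of_nonneg_left (hkeyT _ hIsub) (by norm_num)
    -- conclude the key estimate
    rw [hε_def, div_le_iff₀ (by positivity)]
    have h3 : Sg * C * Tg * Esym ≤ Sg * C * Tg * (2 * dirichletEnergy G f) :=
      mul_le_mul_of_nonneg_left hE2 (by positivity)
    nlinarith [hEsym_lb, h3]
  -- conclude using the key estimate
  have hf0supp : (Function.support (fun v => if v = x0 then (1:ℝ) else 0)).Finite := by
    apply Set.Finite.subset (Set.finite_singleton x0)
    intro v hv
    rw [Function.mem_support] at hv
    by_contra hvx
    rw [Set.mem_singleton_iff] at hvx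
    exact hv (if_neg hvx)
  have hf0x : (fun v => if v = x0 then (1:ℝ) else 0) x0 = 1 := if_pos rfl
  have hmem : dirichletEnergy G (fun v => if v = x0 then (1:ℝ) else 0) ∈
      {E : ℝ | ∃ f : V → ℝ, (Function.support f).Finite ∧ f x0 = 1 ∧ E = dirichletEnergy G f} :=
    ⟨_, hf0supp, hf0x, rfl⟩
  refine lt_of_lt_of_le hε (le_csInf ⟨_, hmem⟩ ?_)
  rintro E ⟨f, h1, h2, rfl⟩
  exact key f h1 h2
end

section
/- Let T be a locally finite tree (connected acyclic simple graph) and let v be a vertex of T with at least two neighbors. For each neighbor v_i of v, let T_i denote the connected component of T − v containing v_i, regarded as a graph with basepoint v_i. Suppose that for each i there exist constants c_i, C_i > 0 and q_i > 1 such that, within the graph T_i, gd(x, n) ≤ C_i·q_i^n for every vertex x of T_i and every n, and gd(v_i, n) ≥ c_i·q_i^n for every n (where gd is computed in T_i with basepoint v_i). Then T admits a nonconstant bounded harmonic function. -/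
open SimpleGraph

/-- The vertex set of the connected component of `T - v` containing `vi`:
vertices reachable from `vi` by a walk avoiding `v`. -/
def compSet {V : Type*} (T : SimpleGraph V) (v vi : V) : Set V :=
  {x | ∃ p : T.Walk vi x, v ∉ p.support}

lemma vi_mem_compSet {V : Type*} (T : SimpleGraph V) {v vi : V} (h : v ≠ vi) :
    vi ∈ compSet T v vi :=
  ⟨SimpleGraph.Walk.nil, by simpa using h⟩

namespace TreeHarmonic

open Filter Topology

variable {W : Type*} {G : SimpleGraph W}

/-- In an acyclic graph, walks realizing the distance are unique. -/
lemma walk_eq_of_length_eq_dist (hT : G.IsAcyclic) {u t : W} (w w' : G.Walk u t)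
    (hw : w.length = G.dist u t) (hw' : w'.length = G.dist u t) : w = w' := by
  have h1 := w.isPath_of_length_eq_dist hw
  have h2 := w'.isPath_of_length_eq_dist hw'
  have := hT.path_unique ⟨w, h1⟩ ⟨w', h2⟩
  exact congrArg Subtype.val this

lemma dist_add_of_mem_support (hc : G.Connected) {u x t : W} (w : G.Walk u t)
    (hw : w.length = G.dist u t) (hx : x ∈ w.support) :
    G.dist u x + G.dist x t = G.dist u t := by
  classical
  have h1 : G.dist u x ≤ (w.takeUntil x hx).length := SimpleGraph.dist_le _
  have h2 : G.dist x t ≤ (w.dropUntil x hx).length := SimpleGraph.dist_le _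
  have h3 : (w.takeUntil x hx).length + (w.dropUntil x hx).length = w.length := by
    rw [← SimpleGraph.Walk.length_append, Walk.take_spec]
  have h4 := hc.dist_triangle (u := u) (v := x) (w := t)
  omega

/-- The set of vertices in the "subtree" below `x` (seen from root `r`) at distance `n`
beyond `x`. -/
def sub (G : SimpleGraph W) (r x : W) (n : ℕ) : Set W :=
  {t | G.dist r t = G.dist r x + n ∧ G.dist x t = n}

/-- Children of `x` in the tree rooted at `r`. -/
def chil (G : SimpleGraph W) (r x : W) : Set W :=
  {y | G.Adj x y ∧ G.dist r y = G.dist r x + 1}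

lemma geodSet_image_fst (hT : G.IsTree) (r x : W) (n : ℕ) :
    Sigma.fst '' geodSet G r x n = sub G r x n := by
  ext t
  constructor
  · rintro ⟨⟨t', w⟩, ⟨hw, hxw, hd⟩, rfl⟩
    have := dist_add_of_mem_support hT.isConnected w hw hxw
    dsimp only at *
    exact ⟨by omega, hd⟩
  · rintro ⟨h1, h2⟩
    obtain ⟨p1, hp1⟩ := hT.isConnected.exists_walk_length_eq_dist r x
    obtain ⟨p2, hp2⟩ := hT.isConnected.exists_walk_length_eq_dist x t
    refine ⟨⟨t, p1.append p2⟩, ⟨?_, ?_, h2⟩, rfl⟩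
    · rw [SimpleGraph.Walk.length_append, hp1, hp2, h1, h2]
    · rw [SimpleGraph.Walk.mem_support_append_iff]
      exact Or.inl (SimpleGraph.Walk.end_mem_support p1)

lemma geodSet_injOn_fst (hT : G.IsTree) (r x : W) (n : ℕ) :
    Set.InjOn Sigma.fst (geodSet G r x n) := by
  rintro ⟨t, w⟩ hw ⟨t', w'⟩ hw' (h : t = t')
  subst h
  have : w = w' := walk_eq_of_length_eq_dist hT.IsAcyclic w w' hw.1 hw'.1
  simp [this]

lemma ncard_sub (hT : G.IsTree) (r x : W) (n : ℕ) :
    (sub G r x n).ncard = (geodSet G r x n).ncard := by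
  rw [← geodSet_image_fst hT, Set.ncard_image_of_injOn (geodSet_injOn_fst hT r x n)]

lemma sub_finite (hT : G.IsTree) (hfin : ∀ x n, (geodSet G r x n).Finite) (x : W) (n : ℕ) :
    (sub G r x n).Finite := by
  rw [← geodSet_image_fst hT]
  exact (hfin x n).image _

lemma dist_le_one_of_adj {u y : W} (h : G.Adj u y) : G.dist u y ≤ 1 :=
  le_trans (SimpleGraph.dist_le (SimpleGraph.Walk.cons h SimpleGraph.Walk.nil)) (by simp)

lemma sub_zero (hc : G.Connected) (r x : W) : sub G r x 0 = {x} := by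
  ext t
  simp only [sub, Set.mem_setOf_eq, Set.mem_singleton_iff]
  constructor
  · rintro ⟨-, h2⟩
    exact (hc.dist_eq_zero_iff.mp h2).symm
  · rintro rfl
    simp [SimpleGraph.dist_self]

lemma sub_root (r : W) (n : ℕ) : sub G r r n = {t | G.dist r t = n} := by
  ext t; simp [sub, SimpleGraph.dist_self]

lemma mem_chil_of_sub_succ (hc : G.Connected) {r x t : W} {n : ℕ}
    (ht : t ∈ sub G r x (n + 1)) : ∃ y ∈ chil G r x, t ∈ sub G r y n := by
  obtain ⟨h1, h2⟩ := ht
  have hxt : x ≠ t := by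
    rintro rfl
    rw [SimpleGraph.dist_self] at h2; omega
  obtain ⟨p, hp⟩ := hc.exists_walk_length_eq_dist x t
  obtain ⟨y, hadj, q, rfl⟩ := SimpleGraph.Walk.exists_eq_cons_of_ne hxt p
  have hq : q.length = n := by
    rw [SimpleGraph.Walk.length_cons] at hp; omega
  have hyt : G.dist y t ≤ n := hq ▸ SimpleGraph.dist_le q
  have htri1 := hc.dist_triangle (u := x) (v := y) (w := t)
  have htri2 := hc.dist_triangle (u := r) (v := y) (w := t)
  have htri3 := hc.dist_triangle (u := r) (v := x) (w := y)
  have hxy := dist_le_one_of_adj hadj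
  have hxy' := dist_le_one_of_adj hadj.symm
  have hyt' : G.dist y t = n := by omega
  have hry : G.dist r y = G.dist r x + 1 := by omega
  exact ⟨y, ⟨hadj, hry⟩, by omega, hyt'⟩

lemma sub_succ_of_chil (hc : G.Connected) {r x y t : W} {n : ℕ}
    (hy : y ∈ chil G r x) (ht : t ∈ sub G r y n) : t ∈ sub G r x (n + 1) := by
  obtain ⟨hadj, hry⟩ := hy
  obtain ⟨h1, h2⟩ := ht
  have htri1 := hc.dist_triangle (u := x) (v := y) (w := t)
  have htri2 := hc.dist_triangle (u := r) (v := x) (w := t)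
  have hxy := dist_le_one_of_adj hadj
  constructor <;> omega

lemma sub_succ (hc : G.Connected) (r x : W) (n : ℕ) :
    sub G r x (n + 1) = ⋃ y ∈ chil G r x, sub G r y n := by
  ext t
  simp only [Set.mem_iUnion, exists_prop]
  exact ⟨mem_chil_of_sub_succ hc, fun ⟨y, hy, ht⟩ => sub_succ_of_chil hc hy ht⟩

lemma chil_disjoint (hT : G.IsTree) {r x y y' : W} (hy : y ∈ chil G r x)
    (hy' : y' ∈ chil G r x) {n : ℕ} {t : W} (ht : t ∈ sub G r y n)
    (ht' : t ∈ sub G r y' n) : y = y' := by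
  obtain ⟨q, hq⟩ := hT.isConnected.exists_walk_length_eq_dist y t
  obtain ⟨q', hq'⟩ := hT.isConnected.exists_walk_length_eq_dist y' t
  have hd : G.dist x t = n + 1 := (sub_succ_of_chil hT.isConnected hy ht).2
  have hw : (SimpleGraph.Walk.cons hy.1 q).length = G.dist x t := by
    rw [SimpleGraph.Walk.length_cons, hq, ht.2, hd]
  have hw' : (SimpleGraph.Walk.cons hy'.1 q').length = G.dist x t := by
    rw [SimpleGraph.Walk.length_cons, hq', ht'.2, hd]
  have := walk_eq_of_length_eq_dist hT.IsAcyclic _ _ hw hw'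
  have h1 := congrArg (fun w => SimpleGraph.Walk.getVert w 1) this
  simpa [SimpleGraph.Walk.getVert_cons_succ, SimpleGraph.Walk.getVert_zero] using h1

lemma chil_subset_neighborSet (r x : W) : chil G r x ⊆ G.neighborSet x := fun _ hy => hy.1

lemma ncard_sub_succ (hT : G.IsTree) (hlf : ∀ x : W, (G.neighborSet x).Finite) {r : W}
    (hfin : ∀ x n, (geodSet G r x n).Finite) (x : W) (n : ℕ) (s : Finset W)
    (hs : ∀ y, y ∈ s ↔ y ∈ chil G r x) :
    (sub G r x (n + 1)).ncard = ∑ y ∈ s, (sub G r y n).ncard := by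
  classical
  have hfy : ∀ y, (sub G r y n).Finite := fun y => sub_finite hT hfin y n
  have hset : sub G r x (n + 1) = ↑(s.biUnion fun y => (hfy y).toFinset) := by
    rw [sub_succ hT.isConnected]
    ext t
    simp [Set.Finite.mem_toFinset, hs]
  rw [hset, Set.ncard_coe_finset, Finset.card_biUnion]
  · refine Finset.sum_congr rfl fun y _ => ?_
    rw [Set.ncard_eq_toFinset_card _ (hfy y)]
  · intro y hy z hz hyz
    rw [Finset.mem_coe, hs] at hy hz
    rw [Function.onFun, Finset.disjoint_left]
    intro t ht ht'
    rw [Set.Finite.mem_toFinset] at ht ht'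
    exact hyz (chil_disjoint hT hy hz ht ht')

/-- The main branch lemma: a bounded nonnegative function on the branch, vanishing at the
root, harmonic away from the root, with total flux 1 out of the root. -/
theorem branch (G : SimpleGraph W) (hT : G.IsTree) (hlf : ∀ x : W, (G.neighborSet x).Finite)
    (r : W) {c C q : ℝ} (hc : 0 < c) (hC : 0 < C) (hq : 1 < q)
    (hfin : ∀ x n, (geodSet G r x n).Finite)
    (hub : ∀ (x : W) (n : ℕ), ((geodSet G r x n).ncard : ℝ) ≤ C * q ^ n)
    (hlb : ∀ n : ℕ, c * q ^ n ≤ ((geodSet G r r n).ncard : ℝ)) :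
    ∃ (B : ℝ) (g : W → ℝ), 0 ≤ B ∧ g r = 0 ∧ (∀ x, 0 ≤ g x) ∧ (∀ x, g x ≤ B) ∧
      (∑ᶠ y ∈ G.neighborSet r, g y) = 1 ∧
      ∀ x, x ≠ r → g x * ((G.neighborSet x).ncard : ℝ) = ∑ᶠ y ∈ G.neighborSet x, g y := by
  classical
  have hq0 : (0 : ℝ) < q := lt_trans one_pos hq
  have hc' : c ≠ 0 := ne_of_gt hc
  -- counting function on subtrees
  have hub' : ∀ (x : W) (n : ℕ), ((sub G r x n).ncard : ℝ) ≤ C * q ^ n := fun x n => by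
    rw [ncard_sub hT]; exact hub x n
  have hlb' : ∀ n : ℕ, c * q ^ n ≤ ((sub G r r n).ncard : ℝ) := fun n => by
    rw [ncard_sub hT]; exact hlb n
  have hapos : ∀ n, (0 : ℝ) < ((sub G r r n).ncard : ℝ) := fun n =>
    lt_of_lt_of_le (by positivity) (hlb' n)
  -- the normalized counting sequence
  have hf0 : ∀ (n : ℕ) (x : W),
      0 ≤ ((sub G r x (n - G.dist r x)).ncard : ℝ) / ((sub G r r n).ncard : ℝ) :=
    fun n x => div_nonneg (Nat.cast_nonneg _) (Nat.cast_nonneg _)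
  have hfb : ∀ (n : ℕ) (x : W), G.dist r x ≤ n →
      ((sub G r x (n - G.dist r x)).ncard : ℝ) / ((sub G r r n).ncard : ℝ)
        ≤ (C / c) * (q ^ G.dist r x)⁻¹ := by
    intro n x hn
    have h1 : ((sub G r x (n - G.dist r x)).ncard : ℝ) / ((sub G r r n).ncard : ℝ)
        ≤ (C * q ^ (n - G.dist r x)) / (c * q ^ n) :=
      div_le_div₀ (by positivity) (hub' x _) (by positivity) (hlb' n)
    refine le_trans h1 (le_of_eq ?_)
    have hqn : q ^ n = q ^ (n - G.dist r x) * q ^ G.dist r x := by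
      rw [← pow_add, Nat.sub_add_cancel hn]
    rw [hqn]
    have h2 : q ^ (n - G.dist r x) ≠ 0 := by positivity
    have h3 : q ^ G.dist r x ≠ 0 := by positivity
    field_simp
  have hCc : (0 : ℝ) ≤ C / c := le_of_lt (div_pos hC hc)
  -- existence of ultrafilter limits
  have hex : ∀ x : W, ∃ L : ℝ, Filter.Tendsto
      (fun n => ((sub G r x (n - G.dist r x)).ncard : ℝ) / ((sub G r r n).ncard : ℝ))
      (Filter.hyperfilter ℕ : Filter ℕ) (nhds L) := by
    intro x
    have hmem : ∀ᶠ n in Filter.atTop, ((sub G r x (n - G.dist r x)).ncard : ℝ) /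
        ((sub G r r n).ncard : ℝ) ∈ Set.Icc (0 : ℝ) (C / c) := by
      rw [Filter.eventually_atTop]
      refine ⟨G.dist r x, fun n hn => ⟨hf0 n x, le_trans (hfb n x hn) ?_⟩⟩
      have : (q ^ G.dist r x)⁻¹ ≤ 1 := by
        rw [inv_le_one_iff₀]
        right
        exact one_le_pow₀ (le_of_lt hq)
      exact mul_le_of_le_one_right hCc this
    have hmem' : Set.Icc (0 : ℝ) (C / c) ∈ ((Filter.hyperfilter ℕ).map
        (fun n => ((sub G r x (n - G.dist r x)).ncard : ℝ) / ((sub G r r n).ncard : ℝ))) :=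
      Filter.mem_map.mpr (Nat.hyperfilter_le_atTop hmem)
    obtain ⟨L, _, hle⟩ := (isCompact_Icc (a := (0:ℝ)) (b := C / c)).ultrafilter_le_nhds
      _ (Filter.le_principal_iff.mpr hmem')
    exact ⟨L, hle⟩
  choose mu hmu using hex
  have hmono : ∀ {p : ℕ → Prop}, (∀ᶠ n in Filter.atTop, p n) →
      ∀ᶠ n in (Filter.hyperfilter ℕ : Filter ℕ), p n := fun h => Nat.hyperfilter_le_atTop h
  have hmu0 : ∀ x, 0 ≤ mu x := fun x =>
    ge_of_tendsto (hmu x) (Filter.Eventually.of_forall fun n => hf0 n x)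
  have hmub : ∀ x, mu x ≤ (C / c) * (q ^ G.dist r x)⁻¹ := fun x =>
    le_of_tendsto (hmu x) (hmono (Filter.eventually_atTop.mpr
      ⟨G.dist r x, fun n hn => hfb n x hn⟩))
  have hmur : mu r = 1 := by
    refine tendsto_nhds_unique (hmu r) ?_
    have hconst : (fun n => ((sub G r r (n - G.dist r r)).ncard : ℝ) /
        ((sub G r r n).ncard : ℝ)) = fun _ => (1 : ℝ) := by
      funext n
      rw [SimpleGraph.dist_self, Nat.sub_zero, div_self (ne_of_gt (hapos n))]
    rw [hconst]
    exact tendsto_const_nhds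
  -- the children finsets
  set cf : W → Finset W := fun x => ((hlf x).subset (chil_subset_neighborSet r x)).toFinset
    with hcf
  have hmemcf : ∀ x y, y ∈ cf x ↔ y ∈ chil G r x := fun x y => Set.Finite.mem_toFinset _
  have hflow : ∀ x, mu x = ∑ y ∈ cf x, mu y := by
    intro x
    have h1 : Filter.Tendsto (fun n => ∑ y ∈ cf x,
        ((sub G r y (n - G.dist r y)).ncard : ℝ) / ((sub G r r n).ncard : ℝ))
        (Filter.hyperfilter ℕ : Filter ℕ) (nhds (∑ y ∈ cf x, mu y)) :=
      tendsto_finset_sum _ fun y _ => hmu y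
    have h2 : ∀ᶠ n in (Filter.hyperfilter ℕ : Filter ℕ),
        ((sub G r x (n - G.dist r x)).ncard : ℝ) / ((sub G r r n).ncard : ℝ) =
          ∑ y ∈ cf x, ((sub G r y (n - G.dist r y)).ncard : ℝ) / ((sub G r r n).ncard : ℝ) := by
      refine hmono (Filter.eventually_atTop.mpr ⟨G.dist r x + 1, fun n hn => ?_⟩)
      have hnx : n - G.dist r x = (n - G.dist r x - 1) + 1 := by omega
      rw [hnx, ncard_sub_succ hT hlf hfin x _ (cf x) (hmemcf x)]
      rw [Nat.cast_sum, Finset.sum_div]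
      refine Finset.sum_congr rfl fun y hy => ?_
      have hdy : G.dist r y = G.dist r x + 1 := ((hmemcf x y).mp hy).2
      have : n - G.dist r y = n - G.dist r x - 1 := by omega
      rw [this]
    exact tendsto_nhds_unique (hmu x) (h1.congr' (Filter.EventuallyEq.symm h2))
  -- geodesic paths from the root
  choose pth hpth using fun x => hT.isConnected.exists_walk_length_eq_dist r x
  obtain ⟨g, hgdef⟩ : ∃ g : W → ℝ, ∀ x, g x = (((pth x).support.tail).map mu).sum :=
    ⟨_, fun _ => rfl⟩
  have hgr : g r = 0 := by
    have hlen : (pth r).length = 0 := by rw [hpth, SimpleGraph.dist_self]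
    have hnil : pth r = SimpleGraph.Walk.nil :=
      SimpleGraph.Walk.nil_iff_eq_nil.mp (SimpleGraph.Walk.nil_iff_length_eq.mpr hlen)
    rw [hgdef, hnil]
    simp
  have hgconcat : ∀ (x y : W) (h : G.Adj x y), pth y = (pth x).concat h →
      g y = g x + mu y := by
    intro x y h he
    rw [hgdef, hgdef, he, SimpleGraph.Walk.support_concat]
    obtain ⟨a, l, hal⟩ : ∃ a l, (pth x).support = a :: l := by
      cases hsup : (pth x).support with
      | nil => exact absurd hsup (SimpleGraph.Walk.support_ne_nil _)
      | cons a l => exact ⟨a, l, rfl⟩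
    rw [hal]
    simp [List.concat_eq_append]
  have hchild : ∀ x y, y ∈ chil G r x → ∃ h : G.Adj x y,
      pth y = (pth x).concat h ∧ g y = g x + mu y := by
    intro x y hy
    have hlen : ((pth x).concat hy.1).length = G.dist r y := by
      rw [SimpleGraph.Walk.length_concat, hpth, hy.2]
    have he : pth y = (pth x).concat hy.1 :=
      walk_eq_of_length_eq_dist hT.IsAcyclic _ _ (hpth y) hlen
    exact ⟨hy.1, he, hgconcat x y hy.1 he⟩
  -- parent structure
  have hpar : ∀ x, x ≠ r → ∃ (u : W) (h : G.Adj u x),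
      G.dist r u + 1 = G.dist r x ∧ pth x = (pth u).concat h := by
    intro x hx
    obtain ⟨u, hadj, q', he⟩ :=
      SimpleGraph.Walk.exists_eq_cons_of_ne hx (pth x).reverse
    have he2 : pth x = q'.reverse.concat hadj.symm := by
      have h0 := congrArg SimpleGraph.Walk.reverse he
      rw [SimpleGraph.Walk.reverse_reverse] at h0
      rw [h0, SimpleGraph.Walk.reverse_cons, ← SimpleGraph.Walk.concat_eq_append]
    have hlen : q'.reverse.length + 1 = G.dist r x := by
      have := hpth x
      rw [he2, SimpleGraph.Walk.length_concat] at this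
      omega
    have hu1 : G.dist r u ≤ q'.reverse.length := SimpleGraph.dist_le _
    have hu2 : G.dist r x ≤ G.dist r u + G.dist u x :=
      hT.isConnected.dist_triangle
    have hu3 : G.dist u x ≤ 1 := dist_le_one_of_adj hadj.symm
    have hd1 : G.dist r u + 1 = G.dist r x := by omega
    have hgeo : q'.reverse.length = G.dist r u := by omega
    have : q'.reverse = pth u :=
      walk_eq_of_length_eq_dist hT.IsAcyclic _ _ hgeo (hpth u)
    exact ⟨u, hadj.symm, hd1, by rw [he2, this]⟩
  -- adjacent vertices differ in distance by exactly one
  have hdich : ∀ x y, G.Adj x y →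
      G.dist r y = G.dist r x + 1 ∨ G.dist r x = G.dist r y + 1 := by
    intro x y h
    have h1 : G.dist r y ≤ G.dist r x + G.dist x y := hT.isConnected.dist_triangle
    have h2 : G.dist r x ≤ G.dist r y + G.dist y x := hT.isConnected.dist_triangle
    have h3 : G.dist x y ≤ 1 := dist_le_one_of_adj h
    have h4 : G.dist y x ≤ 1 := dist_le_one_of_adj h.symm
    by_contra hcon
    push_neg at hcon
    have heq : G.dist r y = G.dist r x := by omega
    have hynot : y ∉ (pth x).support := by
      intro hmem
      have := dist_add_of_mem_support hT.isConnected (pth x) (hpth x) hmem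
      have h5 : G.dist y x = 0 := by omega
      exact h.ne' (hT.isConnected.dist_eq_zero_iff.mp h5)
    have hp2 : ((pth x).concat h).IsPath := by
      rw [← SimpleGraph.Walk.isPath_reverse_iff, SimpleGraph.Walk.reverse_concat]
      refine SimpleGraph.Walk.IsPath.cons ?_ ?_
      · rw [SimpleGraph.Walk.isPath_reverse_iff]
        exact (pth x).isPath_of_length_eq_dist (hpth x)
      · rw [SimpleGraph.Walk.support_reverse, List.mem_reverse]
        exact hynot
    have hpy : (pth y).IsPath := (pth y).isPath_of_length_eq_dist (hpth y)
    have huniq := hT.IsAcyclic.path_unique ⟨(pth x).concat h, hp2⟩ ⟨pth y, hpy⟩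
    have hlen := congrArg (fun p => SimpleGraph.Walk.length p.val) huniq
    simp only [SimpleGraph.Walk.length_concat, hpth] at hlen
    omega
  -- parent uniqueness
  have hparu : ∀ x u y (hu : G.Adj u x) (hy : G.Adj y x),
      pth x = (pth u).concat hu → G.dist r x = G.dist r y + 1 → y = u := by
    intro x u y hu hy he hd
    have hlen : ((pth y).concat hy).length = G.dist r x := by
      rw [SimpleGraph.Walk.length_concat, hpth]; omega
    have he' : pth x = (pth y).concat hy :=
      walk_eq_of_length_eq_dist hT.IsAcyclic _ _ (hpth x) hlen
    have heq : (pth u).concat hu = (pth y).concat hy := by rw [← he, he']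
    have h2 := congrArg (fun p => (SimpleGraph.Walk.reverse p).getVert 1) heq
    have h3 : u = y := by
      simpa [SimpleGraph.Walk.reverse_concat, SimpleGraph.Walk.getVert_cons_succ,
        SimpleGraph.Walk.getVert_zero] using h2
    exact h3.symm
  -- bound on g by induction on distance
  have hK : (0 : ℝ) < q - 1 := by linarith
  have hgb : ∀ (n : ℕ) (x : W), G.dist r x = n →
      0 ≤ g x ∧ g x ≤ (C / c) / (q - 1) * (1 - (q ^ n)⁻¹) := by
    intro n
    induction n with
    | zero =>
      intro x hx
      have : r = x := hT.isConnected.dist_eq_zero_iff.mp hx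
      subst this
      rw [hgr]
      simp
    | succ n ih =>
      intro x hx
      have hxr : x ≠ r := by
        rintro rfl
        rw [SimpleGraph.dist_self] at hx
        omega
      obtain ⟨u, h, hdu, he⟩ := hpar x hxr
      have hdu' : G.dist r u = n := by omega
      obtain ⟨ih0, ihb⟩ := ih u hdu'
      have hg : g x = g u + mu x := hgconcat u x h he
      have hbx := hmub x
      rw [hx] at hbx
      constructor
      · rw [hg]; exact add_nonneg ih0 (hmu0 x)
      · rw [hg]
        have hstep : g u + mu x ≤ (C / c) / (q - 1) * (1 - (q ^ n)⁻¹)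
            + (C / c) * (q ^ (n + 1))⁻¹ := add_le_add ihb hbx
        refine le_trans hstep (le_of_eq ?_)
        have hqn : (q : ℝ) ^ (n + 1) = q ^ n * q := pow_succ q n
        have hqn0 : (q : ℝ) ^ n ≠ 0 := by positivity
        have hq0' : (q : ℝ) ≠ 0 := ne_of_gt hq0
        rw [hqn]
        field_simp
        ring
  -- the neighbor set of a non-root vertex
  have hnbhd : ∀ x, x ≠ r → ∃ u, G.Adj u x ∧ G.dist r u + 1 = G.dist r x ∧
      g x = g u + mu x ∧ (hlf x).toFinset = insert u (cf x) ∧ u ∉ cf x := by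
    intro x hx
    obtain ⟨u, h, hdu, he⟩ := hpar x hx
    refine ⟨u, h, hdu, hgconcat u x h he, ?_, ?_⟩
    · ext y
      rw [Set.Finite.mem_toFinset, Finset.mem_insert, hmemcf]
      constructor
      · intro hy
        rw [SimpleGraph.mem_neighborSet] at hy
        rcases hdich x y hy with hcase | hcase
        · exact Or.inr ⟨hy, hcase⟩
        · exact Or.inl (hparu x u y h hy.symm he (by omega))
      · rintro (rfl | hy)
        · exact h.symm
        · exact hy.1
    · rw [hmemcf]
      rintro ⟨-, hdy⟩
      omega
  refine ⟨(C / c) / (q - 1), g, le_of_lt (div_pos (div_pos hC hc) hK), hgr,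
    fun x => (hgb _ x rfl).1, ?_, ?_, ?_⟩
  · intro x
    refine le_trans (hgb _ x rfl).2 ?_
    have h1 : (0:ℝ) ≤ ((q : ℝ) ^ G.dist r x)⁻¹ := by positivity
    have h2 : (0:ℝ) ≤ (C / c) / (q - 1) := le_of_lt (div_pos (div_pos hC hc) hK)
    nlinarith
  · -- flux out of the root
    have hroot : (hlf r).toFinset = cf r := by
      ext y
      rw [Set.Finite.mem_toFinset, hmemcf]
      constructor
      · intro hy
        rw [SimpleGraph.mem_neighborSet] at hy
        rcases hdich r y hy with hcase | hcase
        · exact ⟨hy, hcase⟩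
        · rw [SimpleGraph.dist_self] at hcase; omega
      · exact fun hy => hy.1
    rw [← Set.Finite.coe_toFinset (hlf r), finsum_mem_coe_finset, hroot]
    have : ∀ y ∈ cf r, g y = mu y := by
      intro y hy
      obtain ⟨-, -, hgy⟩ := hchild r y ((hmemcf r y).mp hy)
      rw [hgy, hgr, zero_add]
    rw [Finset.sum_congr rfl this, ← hflow r, hmur]
  · -- harmonicity away from the root
    intro x hx
    obtain ⟨u, hadj, hdu, hgx, hins, hnotmem⟩ := hnbhd x hx
    have hsumf : ∑ᶠ y ∈ G.neighborSet x, g y = g u + ∑ y ∈ cf x, g y := by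
      rw [← Set.Finite.coe_toFinset (hlf x), finsum_mem_coe_finset, hins,
        Finset.sum_insert hnotmem]
    rw [hsumf]
    have hsum : ∑ y ∈ cf x, g y = (cf x).card * g x + mu x := by
      have : ∀ y ∈ cf x, g y = g x + mu y := by
        intro y hy
        obtain ⟨-, -, hgy⟩ := hchild x y ((hmemcf x y).mp hy)
        exact hgy
      rw [Finset.sum_congr rfl this, Finset.sum_add_distrib, Finset.sum_const,
        ← hflow x, nsmul_eq_mul]
    have hncard : ((G.neighborSet x).ncard : ℝ) = (cf x).card + 1 := by
      have h1 : (G.neighborSet x).ncard = (insert u (cf x)).card := by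
        rw [← hins, ← Set.ncard_coe_finset ((hlf x).toFinset), Set.Finite.coe_toFinset]
      rw [h1, Finset.card_insert_of_notMem hnotmem]
      push_cast
      ring
    rw [hsum, hncard]
    have hgu : g u = g x - mu x := by linarith [hgx]
    rw [hgu]
    ring

section Components

variable {V : Type*} {T : SimpleGraph V}

lemma not_mem_compSet (v vi : V) : v ∉ compSet T v vi := by
  rintro ⟨p, hp⟩
  exact hp (SimpleGraph.Walk.end_mem_support p)

lemma compSet_closed {v vi x y : V} (hx : x ∈ compSet T v vi) (hadj : T.Adj x y)
    (hy : y ≠ v) : y ∈ compSet T v vi := by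
  obtain ⟨p, hp⟩ := hx
  refine ⟨p.concat hadj, ?_⟩
  rw [SimpleGraph.Walk.support_concat, List.mem_append]
  rintro (h | h)
  · exact hp h
  · simp only [List.mem_singleton] at h
    exact hy h.symm

lemma adj_eq_of_mem_compSet (htree : T.IsTree) {v vi x : V} (hvi : T.Adj v vi)
    (hx : x ∈ compSet T v vi) (hadj : T.Adj v x) : x = vi := by
  classical
  obtain ⟨p, hp⟩ := hx
  have hpb : v ∉ p.bypass.support := fun hmem => hp (p.support_bypass_subset hmem)
  have hcons : (SimpleGraph.Walk.cons hvi p.bypass).IsPath :=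
    SimpleGraph.Walk.IsPath.cons p.bypass_isPath hpb
  have hsingle : (SimpleGraph.Walk.cons hadj SimpleGraph.Walk.nil).IsPath := by
    simp [SimpleGraph.Walk.cons_isPath_iff, hadj.ne]
  have huniq := htree.IsAcyclic.path_unique ⟨_, hcons⟩ ⟨_, hsingle⟩
  have hlen := congrArg (fun q => SimpleGraph.Walk.length q.val) huniq
  simp only [SimpleGraph.Walk.length_cons, SimpleGraph.Walk.length_nil] at hlen
  have hnil : p.bypass.length = 0 := by omega
  have := SimpleGraph.Walk.getVert_length p.bypass
  rw [hnil] at this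
  rw [← this, SimpleGraph.Walk.getVert_zero]

lemma mem_compSet_of_support {v vi x : V} {p : T.Walk vi x} (hp : v ∉ p.support)
    {u : V} (hu : u ∈ p.support) : u ∈ compSet T v vi := by
  classical
  exact ⟨p.takeUntil u hu, fun h => hp (SimpleGraph.Walk.support_takeUntil_subset p hu h)⟩

lemma compSet_trans {v v1 v2 x : V} (h1 : x ∈ compSet T v v1) (h2 : x ∈ compSet T v v2) :
    v2 ∈ compSet T v v1 := by
  obtain ⟨p1, hp1⟩ := h1
  obtain ⟨p2, hp2⟩ := h2
  refine ⟨p1.append p2.reverse, ?_⟩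
  rw [SimpleGraph.Walk.mem_support_append_iff]
  rintro (h | h)
  · exact hp1 h
  · rw [SimpleGraph.Walk.support_reverse, List.mem_reverse] at h
    exact hp2 h

lemma reach_induce {S : Set V} : ∀ {a b : V} (p : T.Walk a b),
    (∀ u ∈ p.support, u ∈ S) → ∀ (ha : a ∈ S) (hb : b ∈ S),
    (T.induce S).Reachable ⟨a, ha⟩ ⟨b, hb⟩ := by
  intro a b p
  induction p with
  | nil => intro _ ha hb; rfl
  | @cons a c b h q ih =>
    intro hS ha hb
    have hc : c ∈ S := hS c (by simp)
    have hadj : (T.induce S).Adj ⟨a, ha⟩ ⟨c, hc⟩ := h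
    exact hadj.reachable.trans (ih (fun u hu => hS u (by simp [hu])) hc hb)

lemma induce_connected {v vi : V} (hvi : T.Adj v vi) :
    (T.induce (compSet T v vi)).Connected := by
  have hre : ∀ (x : V) (hx : x ∈ compSet T v vi),
      (T.induce (compSet T v vi)).Reachable ⟨vi, vi_mem_compSet T hvi.ne⟩ ⟨x, hx⟩ := by
    intro x hx
    obtain ⟨p, hp⟩ := hx
    exact reach_induce p (fun u hu => mem_compSet_of_support hp hu) _ _
  have hne : Nonempty ↥(compSet T v vi) := ⟨⟨vi, vi_mem_compSet T hvi.ne⟩⟩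
  exact (SimpleGraph.connected_iff_exists_forall_reachable _).mpr
    ⟨⟨vi, vi_mem_compSet T hvi.ne⟩, fun w => hre w.1 w.2⟩

lemma induce_isTree (htree : T.IsTree) {v vi : V} (hvi : T.Adj v vi) :
    (T.induce (compSet T v vi)).IsTree := by
  refine ⟨induce_connected hvi, ?_⟩
  intro a c hc
  have hinj : Function.Injective
      ⇑(SimpleGraph.Embedding.induce (G := T) (compSet T v vi)).toHom :=
    (SimpleGraph.Embedding.induce (G := T) (compSet T v vi)).injective
  exact htree.IsAcyclic _ (hc.map hinj)

lemma induce_locally_finite (hlf : ∀ x : V, (T.neighborSet x).Finite) (S : Set V)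
    (x : ↥S) : ((T.induce S).neighborSet x).Finite := by
  have hsub : (T.induce S).neighborSet x ⊆ Subtype.val ⁻¹' (T.neighborSet ↑x) := by
    intro z hz
    exact hz
  exact Set.Finite.subset ((hlf ↑x).preimage Subtype.val_injective.injOn) hsub

lemma image_neighborSet_induce {S : Set V} (x : V) (hx : x ∈ S) :
    Subtype.val '' ((T.induce S).neighborSet ⟨x, hx⟩) = T.neighborSet x ∩ S := by
  ext y
  constructor
  · rintro ⟨⟨y, hy⟩, hadj, rfl⟩
    exact ⟨hadj, hy⟩
  · rintro ⟨hadj, hy⟩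
    exact ⟨⟨y, hy⟩, hadj, rfl⟩

lemma nbhd_eq_of_mem_compSet (htree : T.IsTree) {v vi x : V} (hvi : T.Adj v vi)
    (hx : x ∈ compSet T v vi) (hxvi : x ≠ vi) :
    T.neighborSet x = Subtype.val '' ((T.induce (compSet T v vi)).neighborSet ⟨x, hx⟩) := by
  rw [image_neighborSet_induce x hx]
  refine (Set.inter_eq_left.mpr ?_).symm
  intro y hy
  have hyv : y ≠ v := by
    rintro rfl
    exact hxvi (adj_eq_of_mem_compSet htree hvi hx hy.symm)
  exact compSet_closed hx hy hyv

lemma nbhd_vi_eq (htree : T.IsTree) {v vi : V} (hvi : T.Adj v vi) :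
    T.neighborSet vi = insert v
      (Subtype.val '' ((T.induce (compSet T v vi)).neighborSet
        ⟨vi, vi_mem_compSet T hvi.ne⟩)) := by
  rw [image_neighborSet_induce vi (vi_mem_compSet T hvi.ne)]
  ext y
  simp only [Set.mem_insert_iff, Set.mem_inter_iff, SimpleGraph.mem_neighborSet]
  constructor
  · intro hy
    by_cases hyv : y = v
    · exact Or.inl hyv
    · exact Or.inr ⟨hy, compSet_closed (vi_mem_compSet T hvi.ne) hy hyv⟩
  · rintro (rfl | ⟨hy, -⟩)
    · exact hvi.symm
    · exact hy

/-- Assembly lemma: transfer harmonicity from the branch to the big tree. -/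
lemma assemble (htree : T.IsTree) (hlf : ∀ x : V, (T.neighborSet x).Finite)
    {v vi : V} (hvi : T.Adj v vi)
    (g : ↥(compSet T v vi) → ℝ) (h : V → ℝ) (β : ℝ)
    (hgr : g ⟨vi, vi_mem_compSet T hvi.ne⟩ = 0)
    (hflux : (∑ᶠ z ∈ (T.induce (compSet T v vi)).neighborSet
        ⟨vi, vi_mem_compSet T hvi.ne⟩, g z) = 1)
    (hharm : ∀ xb, xb ≠ (⟨vi, vi_mem_compSet T hvi.ne⟩ : ↥(compSet T v vi)) →
        g xb * (((T.induce (compSet T v vi)).neighborSet xb).ncard : ℝ) =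
        ∑ᶠ z ∈ (T.induce (compSet T v vi)).neighborSet xb, g z)
    (hval : ∀ x (hx : x ∈ compSet T v vi), h x = β * g ⟨x, hx⟩ + β)
    (hv0 : h v = 0) :
    ∀ x (hx : x ∈ compSet T v vi),
      h x * ((T.neighborSet x).ncard : ℝ) = ∑ᶠ y ∈ T.neighborSet x, h y := by
  classical
  intro x hx
  have hlfi := induce_locally_finite hlf (compSet T v vi)
  obtain ⟨Ni, hNi⟩ : ∃ Ni : Finset ↥(compSet T v vi),
      Ni = (hlfi ⟨x, hx⟩).toFinset := ⟨_, rfl⟩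
  have hmemNi : ∀ z, z ∈ Ni ↔ z ∈ (T.induce (compSet T v vi)).neighborSet ⟨x, hx⟩ := by
    intro z; rw [hNi, Set.Finite.mem_toFinset]
  have hsumNi : ∀ z ∈ Ni, h ↑z = β * g z + β := fun z _ => hval ↑z z.2
  have hsumg : (∑ z ∈ Ni, g z) =
      ∑ᶠ z ∈ (T.induce (compSet T v vi)).neighborSet ⟨x, hx⟩, g z := by
    rw [hNi]
    exact (finsum_mem_eq_finite_toFinset_sum _ (hlfi ⟨x, hx⟩)).symm
  have hcardg : ((T.induce (compSet T v vi)).neighborSet ⟨x, hx⟩).ncard = Ni.card := by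
    rw [hNi]
    exact Set.ncard_eq_toFinset_card _ _
  by_cases hxvi : x = vi
  · have hnb : T.neighborSet x = insert v (Subtype.val ''
        ((T.induce (compSet T v vi)).neighborSet ⟨x, hx⟩)) := by
      subst hxvi
      exact nbhd_vi_eq htree hvi
    have hfinset : (hlf x).toFinset = insert v (Ni.image Subtype.val) := by
      ext y
      simp only [Set.Finite.mem_toFinset, hnb, Set.mem_insert_iff, Finset.mem_insert,
        Finset.mem_image, Set.mem_image]
      constructor
      · rintro (rfl | ⟨z, hz, rfl⟩)
        · exact Or.inl rfl
        · exact Or.inr ⟨z, (hmemNi z).mpr hz, rfl⟩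
      · rintro (rfl | ⟨z, hz, rfl⟩)
        · exact Or.inl rfl
        · exact Or.inr ⟨z, (hmemNi z).mp hz, rfl⟩
    have hvnot : v ∉ Ni.image Subtype.val := by
      simp only [Finset.mem_image]
      rintro ⟨z, -, hzv⟩
      exact not_mem_compSet v vi (hzv ▸ z.2)
    have hsumf : ∑ᶠ y ∈ T.neighborSet x, h y = h v + ∑ z ∈ Ni, h ↑z := by
      rw [finsum_mem_eq_finite_toFinset_sum _ (hlf x), hfinset,
        Finset.sum_insert hvnot, Finset.sum_image (fun a _ b _ hab => Subtype.val_injective hab)]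
    have hcard : ((T.neighborSet x).ncard : ℝ) = (Ni.card : ℝ) + 1 := by
      have h1 : (T.neighborSet x).ncard = (insert v (Ni.image Subtype.val)).card := by
        rw [← hfinset]
        exact Set.ncard_eq_toFinset_card _ _
      rw [h1, Finset.card_insert_of_notMem hvnot,
        Finset.card_image_of_injective _ Subtype.val_injective]
      push_cast
      ring
    have hfl : (∑ z ∈ Ni, g z) = 1 := by
      rw [hsumg]
      subst hxvi
      exact hflux
    have hg0 : g ⟨x, hx⟩ = 0 := by
      subst hxvi
      exact hgr
    rw [hsumf, hcard, Finset.sum_congr rfl hsumNi, Finset.sum_add_distrib,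
      ← Finset.mul_sum, Finset.sum_const, nsmul_eq_mul, hfl, hv0, hval x hx, hg0]
    ring
  · have hnb := nbhd_eq_of_mem_compSet htree hvi hx hxvi
    have hfinset : (hlf x).toFinset = Ni.image Subtype.val := by
      ext y
      simp only [Set.Finite.mem_toFinset, hnb, Finset.mem_image, Set.mem_image]
      constructor
      · rintro ⟨z, hz, rfl⟩
        exact ⟨z, (hmemNi z).mpr hz, rfl⟩
      · rintro ⟨z, hz, rfl⟩
        exact ⟨z, (hmemNi z).mp hz, rfl⟩
    have hsumf : ∑ᶠ y ∈ T.neighborSet x, h y = ∑ z ∈ Ni, h ↑z := by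
      rw [finsum_mem_eq_finite_toFinset_sum _ (hlf x), hfinset,
        Finset.sum_image (fun a _ b _ hab => Subtype.val_injective hab)]
    have hcard : ((T.neighborSet x).ncard : ℝ) = (Ni.card : ℝ) := by
      have h1 : (T.neighborSet x).ncard = (Ni.image Subtype.val).card := by
        rw [← hfinset]
        exact Set.ncard_eq_toFinset_card _ _
      rw [h1, Finset.card_image_of_injective _ Subtype.val_injective]
    have hxr : (⟨x, hx⟩ : ↥(compSet T v vi)) ≠ ⟨vi, vi_mem_compSet T hvi.ne⟩ := by
      intro he
      exact hxvi (congrArg Subtype.val he)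
    have hg := hharm ⟨x, hx⟩ hxr
    rw [hcardg, ← hsumg] at hg
    rw [hsumf, hcard, Finset.sum_congr rfl hsumNi, Finset.sum_add_distrib,
      ← Finset.mul_sum, Finset.sum_const, nsmul_eq_mul, ← hg, hval x hx]
    ring

end Components

end TreeHarmonic

theorem tree_nonconstant_bounded_harmonic {V : Type*} (T : SimpleGraph V)
    (htree : T.IsTree) (hlf : ∀ x : V, (T.neighborSet x).Finite) (v : V)
    (hdeg : 2 ≤ (T.neighborSet v).ncard)
    (hsub : ∀ vi, ∀ hvi : T.Adj v vi,
      ∃ c C q : ℝ, 0 < c ∧ 0 < C ∧ 1 < q ∧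
        (∀ (x : compSet T v vi) (n : ℕ),
          (geodSet (T.induce (compSet T v vi))
            ⟨vi, vi_mem_compSet T hvi.ne⟩ x n).Finite) ∧
        (∀ (x : compSet T v vi) (n : ℕ),
          ((geodSet (T.induce (compSet T v vi))
            ⟨vi, vi_mem_compSet T hvi.ne⟩ x n).ncard : ℝ) ≤ C * q ^ n) ∧
        (∀ n : ℕ, c * q ^ n ≤
          ((geodSet (T.induce (compSet T v vi))
            ⟨vi, vi_mem_compSet T hvi.ne⟩ ⟨vi, vi_mem_compSet T hvi.ne⟩ n).ncard : ℝ))) :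
    ∃ h : V → ℝ, (∃ M : ℝ, ∀ x, |h x| ≤ M) ∧ (∃ x y, h x ≠ h y) ∧
      ∀ x, h x * ((T.neighborSet x).ncard : ℝ) = ∑ᶠ y ∈ T.neighborSet x, h y := by
  classical
  obtain ⟨v1, hv1m, v2, hv2m, hne⟩ := (Set.one_lt_ncard (hlf v)).mp hdeg
  have hv1 : T.Adj v v1 := hv1m
  have hv2 : T.Adj v v2 := hv2m
  obtain ⟨c1, C1, q1, hc1, hC1, hq1, hfin1, hub1, hlb1⟩ := hsub v1 hv1
  obtain ⟨c2, C2, q2, hc2, hC2, hq2, hfin2, hub2, hlb2⟩ := hsub v2 hv2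
  obtain ⟨B1, g1, hB1, hg1r, hg1nn, hg1b, hflux1, hharm1⟩ :=
    TreeHarmonic.branch (T.induce (compSet T v v1))
      (TreeHarmonic.induce_isTree htree hv1)
      (TreeHarmonic.induce_locally_finite hlf (compSet T v v1))
      ⟨v1, vi_mem_compSet T hv1.ne⟩ hc1 hC1 hq1 hfin1 hub1 hlb1
  obtain ⟨B2, g2, hB2, hg2r, hg2nn, hg2b, hflux2, hharm2⟩ :=
    TreeHarmonic.branch (T.induce (compSet T v v2))
      (TreeHarmonic.induce_isTree htree hv2)
      (TreeHarmonic.induce_locally_finite hlf (compSet T v v2))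
      ⟨v2, vi_mem_compSet T hv2.ne⟩ hc2 hC2 hq2 hfin2 hub2 hlb2
  have hdisj : ∀ x, x ∈ compSet T v v1 → x ∈ compSet T v v2 → False := by
    intro x h1 h2
    have h3 : v2 ∈ compSet T v v1 := TreeHarmonic.compSet_trans h1 h2
    exact hne (TreeHarmonic.adj_eq_of_mem_compSet htree hv1 h3 hv2).symm
  obtain ⟨h, hhdef⟩ : ∃ h : V → ℝ, ∀ x, h x =
      if hx : x ∈ compSet T v v1 then 1 * g1 ⟨x, hx⟩ + 1
      else if hx2 : x ∈ compSet T v v2 then (-1) * g2 ⟨x, hx2⟩ + (-1)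
      else 0 := ⟨_, fun _ => rfl⟩
  have hval1 : ∀ x (hx : x ∈ compSet T v v1), h x = 1 * g1 ⟨x, hx⟩ + 1 := by
    intro x hx
    rw [hhdef, dif_pos hx]
  have hval2 : ∀ x (hx : x ∈ compSet T v v2), h x = (-1) * g2 ⟨x, hx⟩ + (-1) := by
    intro x hx
    rw [hhdef, dif_neg (fun hx1 => hdisj x hx1 hx), dif_pos hx]
  have hval0 : ∀ x, x ∉ compSet T v v1 → x ∉ compSet T v v2 → h x = 0 := by
    intro x h1 h2
    rw [hhdef, dif_neg h1, dif_neg h2]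
  have hv0 : h v = 0 :=
    hval0 v (TreeHarmonic.not_mem_compSet v v1) (TreeHarmonic.not_mem_compSet v v2)
  have hhv1 : h v1 = 1 := by
    rw [hval1 v1 (vi_mem_compSet T hv1.ne), hg1r]
    ring
  have hhv2 : h v2 = -1 := by
    rw [hval2 v2 (vi_mem_compSet T hv2.ne), hg2r]
    ring
  refine ⟨h, ⟨B1 + B2 + 1, ?_⟩, ⟨v1, v, by rw [hhv1, hv0]; norm_num⟩, ?_⟩
  · intro x
    by_cases h1 : x ∈ compSet T v v1
    · rw [hval1 x h1]
      have ha := hg1nn ⟨x, h1⟩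
      have hb := hg1b ⟨x, h1⟩
      rw [abs_of_nonneg (by linarith)]
      linarith
    · by_cases h2 : x ∈ compSet T v v2
      · rw [hval2 x h2]
        have ha := hg2nn ⟨x, h2⟩
        have hb := hg2b ⟨x, h2⟩
        rw [abs_of_nonpos (by linarith)]
        linarith
      · rw [hval0 x h1 h2]
        simp only [abs_zero]
        linarith
  · intro x
    by_cases h1 : x ∈ compSet T v v1
    · exact TreeHarmonic.assemble htree hlf hv1 g1 h 1 hg1r hflux1 hharm1 hval1 hv0 x h1
    · by_cases h2 : x ∈ compSet T v v2
      · exact TreeHarmonic.assemble htree hlf hv2 g2 h (-1) hg2r hflux2 hharm2 hval2 hv0 x h2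
      · by_cases hxv : x = v
        · subst hxv
          have hpt : ∀ y ∈ (hlf x).toFinset,
              h y = (if y = v1 then (1 : ℝ) else 0) + (if y = v2 then (-1 : ℝ) else 0) := by
            intro y hy
            rw [Set.Finite.mem_toFinset] at hy
            have hadj : T.Adj x y := hy
            by_cases hy1 : y = v1
            · subst hy1
              rw [hhv1, if_pos rfl, if_neg hne]
              norm_num
            · by_cases hy2 : y = v2
              · subst hy2
                rw [hhv2, if_neg hy1, if_pos rfl]
                norm_num
              · have hnm1 : y ∉ compSet T x v1 := fun hmem =>
                  hy1 (TreeHarmonic.adj_eq_of_mem_compSet htree hv1 hmem hadj)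
                have hnm2 : y ∉ compSet T x v2 := fun hmem =>
                  hy2 (TreeHarmonic.adj_eq_of_mem_compSet htree hv2 hmem hadj)
                rw [hval0 y hnm1 hnm2, if_neg hy1, if_neg hy2]
                norm_num
          rw [finsum_mem_eq_finite_toFinset_sum _ (hlf x), Finset.sum_congr rfl hpt,
            Finset.sum_add_distrib, Finset.sum_ite_eq' _ v1 (fun _ => (1 : ℝ)),
            Finset.sum_ite_eq' _ v2 (fun _ => (-1 : ℝ)),
            if_pos ((hlf x).mem_toFinset.mpr hv1m), if_pos ((hlf x).mem_toFinset.mpr hv2m),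
            hv0]
          norm_num
        · rw [hval0 x h1 h2]
          have hpt : ∀ y ∈ (hlf x).toFinset, h y = 0 := by
            intro y hy
            rw [Set.Finite.mem_toFinset] at hy
            have hadj : T.Adj x y := hy
            by_cases hyv : y = v
            · subst hyv
              exact hv0
            · have hy1 : y ∉ compSet T v v1 := fun hmem =>
                h1 (TreeHarmonic.compSet_closed hmem hadj.symm hxv)
              have hy2 : y ∉ compSet T v v2 := fun hmem =>
                h2 (TreeHarmonic.compSet_closed hmem hadj.symm hxv)
              exact hval0 y hy1 hy2
          rw [finsum_mem_eq_finite_toFinset_sum _ (hlf x), Finset.sum_congr rfl hpt,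
            Finset.sum_const_zero]
          ring
end

section
/- There exists a bounded nonconstant harmonic function on the Schreier graph 𝓗 of the action of Thompson's group F on the dyadic rationals in (0,1): that is, there is a bounded nonconstant function h : D → ℝ such that for every x ∈ D, h(x)·deg(x) = ∑_{y adjacent to x in 𝓗} h(y). -/
open SimpleGraph

/-- The generator `A` of Thompson's group `F`:
`A(x) = x/2` on `[0,1/2]`, `A(x) = x - 1/4` on `[1/2,3/4]`, `A(x) = 2x - 1` on `[3/4,1]`. -/
noncomputable def Amap (x : ℝ) : ℝ :=
  if x ≤ 1/2 then x/2 else if x ≤ 3/4 then x - 1/4 else 2*x - 1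

/-- The generator `B` of Thompson's group `F`:
`B(x) = x` on `[0,1/2]`, `B(x) = x/2 + 1/4` on `[1/2,3/4]`, `B(x) = x - 1/8` on `[3/4,7/8]`,
`B(x) = 2x - 1` on `[7/8,1]`. -/
noncomputable def Bmap (x : ℝ) : ℝ :=
  if x ≤ 1/2 then x else if x ≤ 3/4 then x/2 + 1/4 else if x ≤ 7/8 then x - 1/8 else 2*x - 1

/-- The set of dyadic rationals strictly between 0 and 1. -/
def dyadics : Set ℝ :=
  {x | (∃ k m : ℕ, 0 < k ∧ 0 < m ∧ x = (k : ℝ) / 2 ^ m) ∧ 0 < x ∧ x < 1}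

/-- The Schreier graph `𝓗` of the action of Thompson's group `F` on the dyadic rationals
in `(0,1)`: distinct `x, y` are adjacent iff `y = A x`, `y = B x`, `x = A y` or `x = B y`. -/
def schreier : SimpleGraph dyadics where
  Adj x y := x ≠ y ∧ ((y : ℝ) = Amap x ∨ (y : ℝ) = Bmap x ∨ (x : ℝ) = Amap y ∨ (x : ℝ) = Bmap y)
  symm := ⟨by rintro x y ⟨hne, hc⟩; exact ⟨hne.symm, by tauto⟩⟩
  loopless := ⟨by rintro x ⟨hne, -⟩; exact hne rfl⟩

/-! ### Binary digit lists -/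

namespace Sch

/-- value of a finite binary digit string, MSB first: `val [e1,...,em] = 0.e1...em`. -/
noncomputable def val : List Bool → ℝ
  | [] => 0
  | d :: t => ((cond d 1 0) + val t) / 2

/-- A valid digit string: nonempty, ends with digit 1. -/
def Valid (L : List Bool) : Prop := L.getLast? = some true

lemma valid_singleton : Valid [true] := rfl

lemma valid_cons_iff (d : Bool) (t : List Bool) :
    Valid (d :: t) ↔ (t = [] ∧ d = true) ∨ (t ≠ [] ∧ Valid t) := by
  cases t with
  | nil => simp [Valid, List.getLast?]
  | cons e u =>
      constructor
      · intro h
        right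
        refine ⟨by simp, ?_⟩
        simpa [Valid, List.getLast?_cons_cons] using h
      · rintro (⟨h, _⟩ | ⟨_, h⟩)
        · simp at h
        · simpa [Valid, List.getLast?_cons_cons] using h

lemma Valid.of_cons {d : Bool} {t : List Bool} (h : Valid (d :: t)) (ht : t ≠ []) : Valid t := by
  rcases (valid_cons_iff d t).1 h with ⟨h1, _⟩ | ⟨_, h2⟩
  · exact absurd h1 ht
  · exact h2

lemma Valid.cons (d : Bool) {t : List Bool} (h : Valid t) : Valid (d :: t) := by
  rcases t with _ | ⟨e, u⟩
  · simp [Valid] at h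
  · exact (valid_cons_iff d (e :: u)).2 (Or.inr ⟨by simp, h⟩)

lemma Valid.ne_nil {L : List Bool} (h : Valid L) : L ≠ [] := by
  rintro rfl; simp [Valid] at h

lemma valid_cons_false {t : List Bool} (h : Valid (false :: t)) : t ≠ [] := by
  intro ht; subst ht; simp [Valid, List.getLast?] at h

lemma val_nonneg (L : List Bool) : 0 ≤ val L := by
  induction L with
  | nil => simp [val]
  | cons d t ih =>
      have : (0:ℝ) ≤ cond d 1 0 := by cases d <;> norm_num
      simp only [val]
      linarith

lemma val_lt_one (L : List Bool) : val L < 1 := by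
  induction L with
  | nil => simp [val]
  | cons d t ih =>
      have : (cond d 1 0 : ℝ) ≤ 1 := by cases d <;> norm_num
      simp only [val]
      linarith

lemma val_pos {L : List Bool} (h : Valid L) : 0 < val L := by
  induction L with
  | nil => exact absurd rfl h.ne_nil
  | cons d t ih =>
      cases d with
      | true =>
          have := val_nonneg t
          simp only [val]; norm_num; linarith
      | false =>
          have ht : t ≠ [] := valid_cons_false h
          have := ih (h.of_cons ht)
          simp only [val]; norm_num; linarith

lemma val_false_lt_half (t : List Bool) : val (false :: t) < 1/2 := by
  have := val_lt_one t
  simp only [val]; norm_num; linarith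

lemma val_true_ge_half (t : List Bool) : 1/2 ≤ val (true :: t) := by
  have := val_nonneg t
  simp only [val]; norm_num; linarith

lemma val_true_gt_half {t : List Bool} (h : Valid t) : 1/2 < val (true :: t) := by
  have := val_pos h
  simp only [val]; norm_num; linarith

lemma val_injOn : ∀ {L M : List Bool}, Valid L → Valid M → val L = val M → L = M := by
  intro L
  induction L with
  | nil => intro M hL _ _; exact absurd rfl hL.ne_nil
  | cons d t ih =>
      intro M hL hM hval
      cases M with
      | nil => exact absurd rfl hM.ne_nil
      | cons e u =>
          have hde : d = e := by
            by_contra hne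
            rcases Bool.eq_false_or_eq_true d with hd | hd <;> rcases Bool.eq_false_or_eq_true e with he | he <;>
              subst hd <;> subst he <;> first
              | exact hne rfl
              | · have h1 := val_false_lt_half t
                  have h2 := val_true_ge_half u
                  rw [hval] at h1; linarith
              | · have h1 := val_false_lt_half u
                  have h2 := val_true_ge_half t
                  rw [← hval] at h1; linarith
          subst hde
          have htu : val t = val u := by
            have : ((cond d 1 0 : ℝ) + val t)/2 = ((cond d 1 0 : ℝ) + val u)/2 := hval
            field_simp at this
            linarith
          rcases eq_or_ne t [] with rfl | ht
          · rcases eq_or_ne u [] with rfl | hu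
            · rfl
            · have := val_pos (hM.of_cons hu)
              simp [val] at htu; linarith
          · rcases eq_or_ne u [] with rfl | hu
            · have := val_pos (hL.of_cons ht)
              simp [val] at htu; linarith
            · rw [ih (hL.of_cons ht) (hM.of_cons hu) htu]

/-- numerator of the digit string -/
def num : List Bool → ℕ
  | [] => 0
  | d :: t => (cond d 1 0) * 2 ^ t.length + num t

lemma val_eq_num_div (L : List Bool) : val L = (num L : ℝ) / 2 ^ L.length := by
  induction L with
  | nil => simp [val, num]
  | cons d t ih =>
      simp only [val, num, List.length_cons, ih]
      have h2 : (2:ℝ) ^ t.length ≠ 0 := by positivity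
      have hc : ((cond d 1 0 : ℕ) : ℝ) = (cond d 1 0 : ℝ) := by cases d <;> norm_num
      push_cast
      rw [pow_succ, hc]
      field_simp

lemma val_mem_dyadics {L : List Bool} (h : Valid L) : val L ∈ dyadics := by
  refine ⟨⟨num L, L.length, ?_, ?_, val_eq_num_div L⟩, val_pos h, val_lt_one L⟩
  · by_contra hk
    push_neg at hk
    have hn : num L = 0 := by omega
    have := val_pos h
    rw [val_eq_num_div L, hn] at this
    simp at this
  · have := h.ne_nil
    cases L with
    | nil => exact absurd rfl this
    | cons d t => simp

lemma exists_list_aux : ∀ m : ℕ, ∀ k : ℕ, 0 < k → (k:ℝ) < 2 ^ m →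
    ∃ L, Valid L ∧ val L = (k : ℝ) / 2 ^ m := by
  intro m
  induction m with
  | zero =>
      intro k hk hlt
      simp only [pow_zero] at hlt
      have : (1:ℝ) ≤ (k:ℝ) := by exact_mod_cast hk
      linarith
  | succ m ih =>
      intro k hk hlt
      rcases Nat.even_or_odd k with ⟨j, hj⟩ | hodd
      · subst hj
        have hj0 : 0 < j := by omega
        have hjlt : (j:ℝ) < 2 ^ m := by
          have : ((j + j : ℕ) : ℝ) < 2 ^ (m+1) := hlt
          push_cast at this ⊢
          rw [pow_succ] at this
          linarith
        obtain ⟨L, hL, hval⟩ := ih j hj0 hjlt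
        refine ⟨L, hL, ?_⟩
        rw [hval]
        push_cast
        rw [pow_succ]
        field_simp
        ring
      · by_cases hcmp : k < 2 ^ m
        · -- leading digit 0
          obtain ⟨L, hL, hval⟩ := ih k hk (by exact_mod_cast hcmp)
          refine ⟨false :: L, hL.cons false, ?_⟩
          simp only [val, hval]
          rw [pow_succ]
          field_simp
          simp
        · -- leading digit 1
          push_neg at hcmp
          rcases Nat.eq_zero_or_pos m with rfl | hm
          · -- k odd, 1 ≤ k < 2 : k = 1
            have hk2 : (k:ℝ) < 2 := by simpa using hlt
            have : k = 1 := by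
              have : k < 2 := by exact_mod_cast hk2
              omega
            subst this
            exact ⟨[true], valid_singleton, by simp [val]⟩
          · set j := k - 2 ^ m with hjdef
            have hkj : k = 2 ^ m + j := by omega
            have hj0 : 0 < j := by
              rcases Nat.eq_zero_or_pos j with hj | hj
              · exfalso
                have : k = 2 ^ m := by omega
                rw [this] at hodd
                have hev : Even (2 ^ m) := (Nat.even_pow).mpr ⟨even_two, by omega⟩
                exact (Nat.not_even_iff_odd.mpr hodd) hev
              · exact hj
            have hjlt : (j:ℝ) < 2 ^ m := by
              have hkr : (k:ℝ) = 2 ^ m + (j:ℝ) := by rw [hkj]; push_cast; ring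
              rw [hkr, pow_succ] at hlt
              linarith
            obtain ⟨L, hL, hval⟩ := ih j hj0 hjlt
            refine ⟨true :: L, hL.cons true, ?_⟩
            simp only [val, hval]
            have hkr : (k:ℝ) = 2 ^ m + (j:ℝ) := by rw [hkj]; push_cast; ring
            rw [hkr, pow_succ]
            have h2 : (2:ℝ) ^ m ≠ 0 := by positivity
            field_simp
            simp

lemma exists_list (x : dyadics) : ∃ L, Valid L ∧ val L = (x : ℝ) := by
  obtain ⟨⟨k, m, hk, hm, hx⟩, hpos, hlt⟩ := x.2
  have hklt : (k:ℝ) < 2 ^ m := by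
    have h2 : (0:ℝ) < 2 ^ m := by positivity
    have := hlt
    rw [hx] at this
    calc (k:ℝ) = (k:ℝ)/2^m * 2^m := by field_simp
    _ < 1 * 2 ^ m := by apply mul_lt_mul_of_pos_right _ h2; rwa [← hx]
    _ = 2 ^ m := by ring
  obtain ⟨L, hL, hval⟩ := exists_list_aux m k hk hklt
  exact ⟨L, hL, by rw [hval, ← hx]⟩

/-! ### The generators as maps on digit lists -/

def amapL : List Bool → List Bool
  | [] => []
  | false :: t => false :: false :: t
  | [true] => [false, true]
  | true :: false :: v => false :: true :: v
  | true :: true :: t => true :: t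

def bmapL : List Bool → List Bool
  | [] => []
  | false :: t => false :: t
  | [true] => [true]
  | true :: false :: v => true :: false :: false :: v
  | [true, true] => [true, false, true]
  | [true, true, true] => [true, true]
  | true :: true :: false :: u => true :: false :: true :: u
  | true :: true :: true :: t => true :: true :: t

def ainvL : List Bool → List Bool
  | [] => []
  | [false] => [false]
  | false :: false :: t => false :: t
  | [false, true] => [true]
  | false :: true :: v => true :: false :: v
  | [true] => [true, true]
  | true :: t => true :: true :: t

def binvL : List Bool → List Bool
  | [] => []
  | false :: t => false :: t
  | [true] => [true]
  | [true, false] => [true, false]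
  | true :: false :: false :: v => true :: false :: v
  | [true, false, true] => [true, true]
  | true :: false :: true :: u => true :: true :: false :: u
  | true :: true :: t => true :: true :: true :: t

lemma val_cons (d : Bool) (t : List Bool) : val (d :: t) = ((cond d 1 0) + val t) / 2 := by rw [val]

lemma valid_tfv {v : List Bool} (h : Valid (true :: false :: v)) : Valid v := by
  have h1 : Valid (false :: v) := h.of_cons (by simp)
  exact h1.of_cons (valid_cons_false h1)

lemma valid_ttfu {u : List Bool} (h : Valid (true :: true :: false :: u)) : Valid u := by
  have h1 : Valid (false :: u) := (h.of_cons (by simp)).of_cons (by simp)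
  exact h1.of_cons (valid_cons_false h1)

lemma amapL_spec {L : List Bool} (h : Valid L) : Amap (val L) = val (amapL L) := by
  match L, h with
  | false :: t, h =>
      have h1 : val t < 1 := val_lt_one t
      have h0 : 0 ≤ val t := val_nonneg t
      simp only [amapL, Amap, val_cons, cond_false]
      rw [if_pos (by linarith)]
      ring
  | [true], _ =>
      simp only [amapL, Amap, val_cons, val, cond_true, cond_false]
      norm_num
  | true :: false :: v, h =>
      have h0 : 0 < val v := val_pos (valid_tfv h)
      have h1 : val v < 1 := val_lt_one v
      simp only [amapL, Amap, val_cons, cond_true, cond_false]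
      rw [if_neg (by linarith), if_pos (by linarith)]
      ring
  | true :: true :: t, h =>
      rcases eq_or_ne t [] with rfl | ht
      · simp only [amapL, Amap, val_cons, val, cond_true]
        norm_num
      · have h0 : 0 < val t := val_pos ((h.of_cons (by simp)).of_cons ht)
        have h1 : val t < 1 := val_lt_one t
        simp only [amapL, Amap, val_cons, cond_true]
        rw [if_neg (by linarith), if_neg (by linarith)]
        ring

lemma bmapL_spec {L : List Bool} (h : Valid L) : Bmap (val L) = val (bmapL L) := by
  match L, h with
  | false :: t, h =>
      have h1 : val t < 1 := val_lt_one t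
      have h0 : 0 ≤ val t := val_nonneg t
      simp only [bmapL, Bmap, val_cons, cond_false]
      rw [if_pos (by linarith)]
  | [true], _ =>
      simp only [bmapL, Bmap, val_cons, val, cond_true]
      norm_num
  | [true, true], _ =>
      simp only [bmapL, Bmap, val_cons, val, cond_true, cond_false]
      norm_num
  | [true, true, true], _ =>
      simp only [bmapL, Bmap, val_cons, val, cond_true, cond_false]
      norm_num
  | true :: false :: v, h =>
      have h0 : 0 < val v := val_pos (valid_tfv h)
      have h1 : val v < 1 := val_lt_one v
      simp only [bmapL, Bmap, val_cons, cond_true, cond_false]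
      rw [if_neg (by linarith), if_pos (by linarith)]
      ring
  | true :: true :: false :: u, h =>
      have h0 : 0 < val u := val_pos (valid_ttfu h)
      have h1 : val u < 1 := val_lt_one u
      simp only [bmapL, Bmap, val_cons, cond_true, cond_false]
      rw [if_neg (by linarith), if_neg (by linarith), if_pos (by linarith)]
      ring
  | true :: true :: true :: t, h =>
      rcases eq_or_ne t [] with rfl | ht
      · simp only [bmapL, Bmap, val_cons, val, cond_true]
        norm_num
      · have h0 : 0 < val t :=
          val_pos (((h.of_cons (by simp)).of_cons (by simp)).of_cons ht)
        have h1 : val t < 1 := val_lt_one t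
        simp only [bmapL, Bmap, val_cons, cond_true]
        rw [if_neg (by linarith), if_neg (by linarith), if_neg (by linarith)]
        ring

/-! ### Validity preservation and inverses -/

lemma valid_amapL {L : List Bool} (h : Valid L) : Valid (amapL L) := by
  match L, h with
  | false :: t, h => exact h.cons false
  | [true], _ => exact valid_singleton.cons false
  | true :: false :: v, h => exact ((valid_tfv h).cons true).cons false
  | true :: true :: t, h =>
      rcases eq_or_ne t [] with rfl | ht
      · exact valid_singleton
      · exact ((h.of_cons (by simp)).of_cons ht).cons true

lemma valid_bmapL {L : List Bool} (h : Valid L) : Valid (bmapL L) := by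
  match L, h with
  | false :: t, h => exact h
  | [true], _ => exact valid_singleton
  | [true, true], _ => exact (valid_singleton.cons false).cons true
  | [true, true, true], _ => exact valid_singleton.cons true
  | true :: false :: v, h => exact (((valid_tfv h).cons false).cons false).cons true
  | true :: true :: false :: u, h =>
      exact (((valid_ttfu h).cons true).cons false).cons true
  | true :: true :: true :: t, h =>
      rcases t with _ | ⟨c, t'⟩
      · exact valid_singleton.cons true
      · exact ((((h.of_cons (by simp)).of_cons (by simp)).of_cons (by simp)).cons true).cons true

lemma valid_ainvL {L : List Bool} (h : Valid L) : Valid (ainvL L) := by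
  match L, h with
  | false :: false :: t, h => exact h.of_cons (by simp)
  | [false, true], _ => exact valid_singleton
  | false :: true :: v, h =>
      rcases v with _ | ⟨c, v'⟩
      · exact valid_singleton
      · exact ((((h.of_cons (by simp))).of_cons (by simp)).cons false).cons true
  | [true], _ => exact valid_singleton.cons true
  | true :: t, h =>
      rcases t with _ | ⟨c, t'⟩
      · exact valid_singleton.cons true
      · exact (((h.of_cons (by simp))).cons true).cons true

lemma valid_binvL {L : List Bool} (h : Valid L) : Valid (binvL L) := by
  match L, h with
  | false :: t, h => exact h
  | [true], _ => exact valid_singleton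
  | true :: false :: false :: v, h =>
      have : Valid v := by
        have h1 : Valid (false :: v) := (h.of_cons (by simp)).of_cons (by simp)
        exact h1.of_cons (valid_cons_false h1)
      exact (this.cons false).cons true
  | [true, false, true], _ => exact valid_singleton.cons true
  | true :: false :: true :: u, h =>
      rcases u with _ | ⟨c, u'⟩
      · exact valid_singleton.cons true
      · have : Valid (c :: u') := ((h.of_cons (by simp)).of_cons (by simp)).of_cons (by simp)
        exact ((this.cons false).cons true).cons true
  | true :: true :: t, h =>
      rcases t with _ | ⟨c, t'⟩
      · exact (valid_singleton.cons true).cons true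
      · exact ((((h.of_cons (by simp)).of_cons (by simp))).cons true).cons true |>.cons true

lemma ainvL_amapL {L : List Bool} (h : Valid L) : ainvL (amapL L) = L := by
  match L, h with
  | false :: t, _ => rfl
  | [true], _ => rfl
  | true :: false :: v, h =>
      obtain ⟨c, v', rfl⟩ : ∃ c v', v = c :: v' := by
        rcases v with _ | ⟨c, v'⟩
        · exact absurd rfl (valid_cons_false (h.of_cons (by simp)))
        · exact ⟨c, v', rfl⟩
      rfl
  | true :: true :: t, _ =>
      rcases t with _ | ⟨c, t'⟩ <;> rfl

lemma amapL_ainvL {L : List Bool} (h : Valid L) : amapL (ainvL L) = L := by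
  match L, h with
  | [false, true], _ => rfl
  | false :: false :: t, _ => rfl
  | false :: true :: v, h =>
      rcases v with _ | ⟨c, v'⟩ <;> rfl
  | [true], _ => rfl
  | true :: t, h =>
      rcases t with _ | ⟨c, t'⟩ <;> rfl

lemma binvL_bmapL {L : List Bool} (h : Valid L) : binvL (bmapL L) = L := by
  match L, h with
  | false :: t, _ => rfl
  | [true], _ => rfl
  | [true, true], _ => rfl
  | [true, true, true], _ => rfl
  | true :: false :: v, h =>
      rcases v with _ | ⟨c, v'⟩ <;> rfl
  | true :: true :: false :: u, h =>
      obtain ⟨c, u', rfl⟩ : ∃ c u', u = c :: u' := by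
        rcases u with _ | ⟨c, u'⟩
        · exact absurd rfl (valid_cons_false ((h.of_cons (by simp)).of_cons (by simp)))
        · exact ⟨c, u', rfl⟩
      rfl
  | true :: true :: true :: t, h =>
      rcases t with _ | ⟨c, t'⟩ <;> rfl

lemma bmapL_binvL {L : List Bool} (h : Valid L) : bmapL (binvL L) = L := by
  match L, h with
  | false :: t, _ => rfl
  | [true], _ => rfl
  | true :: false :: false :: v, _ => rfl
  | [true, false, true], _ => rfl
  | true :: false :: true :: u, h =>
      rcases u with _ | ⟨c, u'⟩ <;> rfl
  | true :: true :: t, h =>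
      rcases t with _ | ⟨c, t'⟩ <;> rfl

/-! ### Embedding into the vertex type -/

instance : DecidablePred Valid := fun L => by unfold Valid; infer_instance

noncomputable def emb (L : List Bool) : dyadics :=
  if h : Valid L then ⟨val L, val_mem_dyadics h⟩ else ⟨val [true], val_mem_dyadics valid_singleton⟩

lemma emb_val {L : List Bool} (h : Valid L) : (emb L : ℝ) = val L := by
  simp [emb, h]

lemma emb_inj {F G : List Bool} (hF : Valid F) (hG : Valid G) (h : emb F = emb G) : F = G := by
  apply val_injOn hF hG
  have := congrArg (Subtype.val) h
  rwa [emb_val hF, emb_val hG] at this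

lemma exists_emb (x : dyadics) : ∃ L, Valid L ∧ emb L = x := by
  obtain ⟨L, hL, hv⟩ := exists_list x
  exact ⟨L, hL, Subtype.ext (by rw [emb_val hL, hv])⟩

lemma adj_iff {L F : List Bool} (hL : Valid L) (hF : Valid F) :
    schreier.Adj (emb L) (emb F) ↔
      (F ≠ L ∧ (F = amapL L ∨ F = bmapL L ∨ F = ainvL L ∨ F = binvL L)) := by
  constructor
  · rintro ⟨hne, hc⟩
    refine ⟨fun hFL => hne (by rw [hFL]), ?_⟩
    rcases hc with h | h | h | h
    · left
      apply val_injOn hF (valid_amapL hL)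
      rw [← amapL_spec hL, ← emb_val hF, ← emb_val hL]; exact h
    · right; left
      apply val_injOn hF (valid_bmapL hL)
      rw [← bmapL_spec hL, ← emb_val hF, ← emb_val hL]; exact h
    · right; right; left
      have : L = amapL F := by
        apply val_injOn hL (valid_amapL hF)
        rw [← amapL_spec hF, ← emb_val hF, ← emb_val hL]; exact h
      rw [this, ainvL_amapL hF]
    · right; right; right
      have : L = bmapL F := by
        apply val_injOn hL (valid_bmapL hF)
        rw [← bmapL_spec hF, ← emb_val hF, ← emb_val hL]; exact h
      rw [this, binvL_bmapL hF]
  · rintro ⟨hne, hc⟩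
    refine ⟨fun h => hne (emb_inj hL hF h).symm, ?_⟩
    rcases hc with rfl | rfl | rfl | rfl
    · left; rw [emb_val hF, emb_val hL, amapL_spec hL]
    · right; left; rw [emb_val hF, emb_val hL, bmapL_spec hL]
    · right; right; left
      rw [emb_val hF, emb_val hL, amapL_spec (valid_ainvL hL), amapL_ainvL hL]
    · right; right; right
      rw [emb_val hF, emb_val hL, bmapL_spec (valid_binvL hL), bmapL_binvL hL]

lemma neighborSet_eq {L : List Bool} (hL : Valid L) :
    schreier.neighborSet (emb L) =
      {y | ∃ F, Valid F ∧ y = emb F ∧ F ≠ L ∧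
        (F = amapL L ∨ F = bmapL L ∨ F = ainvL L ∨ F = binvL L)} := by
  ext y
  constructor
  · intro hy
    obtain ⟨F, hF, rfl⟩ := exists_emb y
    obtain ⟨h1, h2⟩ := (adj_iff hL hF).1 hy
    exact ⟨F, hF, rfl, h1, h2⟩
  · rintro ⟨F, hF, rfl, h1, h2⟩
    exact (adj_iff hL hF).2 ⟨h1, h2⟩

/-! ### The harmonic function on digit lists -/

noncomputable def sq : ℝ := Real.sqrt 2

lemma sq_sq : sq * sq = 2 := Real.mul_self_sqrt (by norm_num)

lemma sq_gt : 1.4 < sq := by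
  rw [sq, show (1.4:ℝ) = |1.4| by rw [abs_of_nonneg]; norm_num, ← Real.sqrt_sq_eq_abs]
  apply Real.sqrt_lt_sqrt (by norm_num)
  norm_num

lemma sq_lt : sq < 1.5 := by
  rw [sq, show (1.5:ℝ) = |1.5| by rw [abs_of_nonneg]; norm_num, ← Real.sqrt_sq_eq_abs]
  apply Real.sqrt_lt_sqrt (by norm_num)
  norm_num

noncomputable def wt (d : Bool) : ℝ := cond d (sq - 1) (2 - sq)

noncomputable def W : List Bool → ℝ
  | [] => 1
  | d :: t => wt d * W t

lemma W_mem (L : List Bool) : 0 ≤ W L ∧ W L ≤ 1 := by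
  induction L with
  | nil => norm_num [W]
  | cons d t ih =>
      have h1 : 0 ≤ wt d ∧ wt d ≤ 1 := by
        cases d <;> simp only [wt, cond_true, cond_false] <;>
          constructor <;> nlinarith [sq_gt, sq_lt]
      simp only [W]
      constructor
      · exact mul_nonneg h1.1 ih.1
      · calc wt d * W t ≤ 1 * 1 := mul_le_mul h1.2 ih.2 ih.1 (by norm_num)
        _ = 1 := by norm_num

def penult : List Bool → Bool
  | [a, _] => a
  | _ :: b :: c :: t => penult (b :: c :: t)
  | _ => false

def mid : List Bool → List Bool
  | a :: b :: c :: t => a :: mid (b :: c :: t)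
  | _ => []

noncomputable def cmb (p : Bool) (T : ℝ) : ℝ := cond p (1 - T) T

noncomputable def G (u : List Bool) : ℝ :=
  if u.length ≤ 1 then sq - 1 else cmb (penult u) ((3*sq - 4) * W (mid u))

noncomputable def G2 (u : List Bool) : ℝ :=
  if u.length ≤ 1 then sq * (sq - 1) else cmb (penult u) ((sq/2) * ((3*sq - 4) * W (mid u)))

noncomputable def H : List Bool → ℝ
  | [] => sq - 1
  | [false] => sq - 1
  | [true] => sq - 1
  | [true, true] => sq - 1
  | false :: false :: t => H (false :: t)
  | false :: true :: u => G u
  | true :: false :: u => G u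
  | true :: true :: false :: u => G2 u
  | true :: true :: true :: t => H (true :: true :: t)

lemma H_one : H [true] = sq - 1 := rfl
lemma H_two : H [true, true] = sq - 1 := rfl
lemma H_ff (t : List Bool) : H (false :: false :: t) = H (false :: t) := rfl
lemma H_ft (u : List Bool) : H (false :: true :: u) = G u := rfl
lemma H_tf (u : List Bool) : H (true :: false :: u) = G u := rfl
lemma H_ttf (u : List Bool) : H (true :: true :: false :: u) = G2 u := rfl
lemma H_ttt (t : List Bool) : H (true :: true :: true :: t) = H (true :: true :: t) := rfl

lemma G_nil : G [] = sq - 1 := rfl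
lemma G_single (c : Bool) : G [c] = sq - 1 := rfl
lemma G2_single (c : Bool) : G2 [c] = sq * (sq - 1) := rfl

lemma G_pair (p q : Bool) : G [p, q] = cmb p (3*sq - 4) := by
  simp [G, penult, mid, W, cmb]

lemma penult_cons' (c : Bool) (z : List Bool) (hz : 2 ≤ z.length) :
    penult (c :: z) = penult z := by
  obtain ⟨d, e, w, rfl⟩ : ∃ d e w, z = d :: e :: w := by
    rcases z with _ | ⟨d, _ | ⟨e, w⟩⟩
    · simp at hz
    · simp at hz
    · exact ⟨d, e, w, rfl⟩
  rfl

lemma mid_cons' (c : Bool) (z : List Bool) (hz : 2 ≤ z.length) :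
    mid (c :: z) = c :: mid z := by
  obtain ⟨d, e, w, rfl⟩ : ∃ d e w, z = d :: e :: w := by
    rcases z with _ | ⟨d, _ | ⟨e, w⟩⟩
    · simp at hz
    · simp at hz
    · exact ⟨d, e, w, rfl⟩
  rfl

lemma G_ge_two (z : List Bool) (hz : 2 ≤ z.length) :
    G z = cmb (penult z) ((3*sq - 4) * W (mid z)) := by
  simp only [G, if_neg (by omega : ¬ z.length ≤ 1)]

lemma G2_ge_two (z : List Bool) (hz : 2 ≤ z.length) :
    G2 z = cmb (penult z) ((sq/2) * ((3*sq - 4) * W (mid z))) := by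
  simp only [G2, if_neg (by omega : ¬ z.length ≤ 1)]

lemma G_cons (c : Bool) (z : List Bool) (hz : 2 ≤ z.length) :
    G (c :: z) = cmb (penult z) (wt c * ((3*sq - 4) * W (mid z))) := by
  have h1 : 2 ≤ (c :: z).length := by simp; omega
  rw [G_ge_two (c :: z) h1, penult_cons' c z hz, mid_cons' c z hz]
  simp only [W]
  ring_nf

lemma G2_cons (c : Bool) (z : List Bool) (hz : 2 ≤ z.length) :
    G2 (c :: z) = cmb (penult z) (wt c * ((sq/2) * ((3*sq - 4) * W (mid z)))) := by
  have h1 : 2 ≤ (c :: z).length := by simp; omega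
  rw [G2_ge_two (c :: z) h1, penult_cons' c z hz, mid_cons' c z hz]
  simp only [W]
  ring_nf

/-! ### Core algebraic identities -/

lemma idA (v' : List Bool) (hv : 2 ≤ v'.length) :
    G (false :: v') * 4 =
      G (false :: v') + G (false :: false :: v') + G2 (false :: v') + G v' := by
  have h1 : 2 ≤ (false :: v').length := by simp; omega
  rw [G_cons false v' hv, G_cons false (false :: v') h1, G2_cons false v' hv,
    G_ge_two v' hv, penult_cons' false v' hv, mid_cons' false v' hv]
  simp only [W, wt, cond_false]
  set P := W (mid v') with hP
  cases penult v' <;> simp only [cmb, cond_false, cond_true]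
  · linear_combination (-((3*sq-4) * P)/2) * sq_sq
  · linear_combination (((3*sq-4) * P)/2) * sq_sq

lemma idB (u : List Bool) (hu : 2 ≤ u.length) :
    G (true :: u) * 4 =
      G (true :: u) + G (false :: true :: u) + G2 (true :: u) + G2 u := by
  have h1 : 2 ≤ (true :: u).length := by simp; omega
  rw [G_cons true u hu, G_cons false (true :: u) h1, G2_cons true u hu,
    G2_ge_two u hu, penult_cons' true u hu, mid_cons' true u hu]
  simp only [W, wt, cond_false, cond_true]
  set P := W (mid u) with hP
  cases penult u <;> simp only [cmb, cond_false, cond_true]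
  · linear_combination (((3*sq-4) * P)/2) * sq_sq
  · linear_combination (-((3*sq-4) * P)/2) * sq_sq

lemma idC (u : List Bool) (hu : 2 ≤ u.length) :
    G2 u * 3 = G u + G (true :: u) + G2 u := by
  rw [G_cons true u hu, G2_ge_two u hu, G_ge_two u hu]
  simp only [wt, cond_true]
  set P := W (mid u) with hP
  cases penult u <;> simp only [cmb, cond_false, cond_true] <;> ring

lemma idD : G [true] * 4 = G [true] + G [false, true] + G2 [true] + H [true, true] := by
  rw [G_single, G_pair, G2_single, H_two]
  simp only [cmb, cond_false]
  linear_combination (-1 : ℝ) * sq_sq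

lemma idE : G [false, true] * 4 =
    G [false, true] + G [false, false, true] + G2 [false, true] + G [true] := by
  rw [G_single, G_pair, G_cons false [false, true] (by simp), G2_ge_two [false, true] (by simp)]
  simp only [penult, mid, W, wt, cmb, cond_false]
  linear_combination (3/2 : ℝ) * sq_sq

lemma idF : G [true, true] * 4 =
    G [true, true] + G [false, true, true] + G2 [true, true] + G2 [true] := by
  rw [G_pair, G_cons false [true, true] (by simp), G2_ge_two [true, true] (by simp), G2_single]
  simp only [penult, mid, W, wt, cmb, cond_false, cond_true]
  linear_combination (-5/2 : ℝ) * sq_sq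

lemma idG : G2 [true] * 3 = G [true] + G [true, true] + G2 [true] := by
  rw [G2_single, G_single, G_pair]
  simp only [cmb, cond_true]
  linear_combination (2 : ℝ) * sq_sq

/-! ### Bounds -/

lemma G_mem (u : List Bool) : 0 ≤ G u ∧ G u ≤ 1 := by
  by_cases h : u.length ≤ 1
  · simp only [G, if_pos h]
    constructor <;> nlinarith [sq_gt, sq_lt]
  · simp only [G, if_neg h]
    have hW := W_mem (mid u)
    have hc4 : 0 ≤ 3*sq - 4 ∧ 3*sq - 4 ≤ 1 := by
      constructor <;> nlinarith [sq_gt, sq_lt]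
    have hT : 0 ≤ (3*sq - 4) * W (mid u) ∧ (3*sq - 4) * W (mid u) ≤ 1 := by
      constructor
      · exact mul_nonneg hc4.1 hW.1
      · calc (3*sq-4) * W (mid u) ≤ 1 * 1 := mul_le_mul hc4.2 hW.2 hW.1 (by norm_num)
          _ = 1 := by norm_num
    cases penult u <;> simp only [cmb, cond_false, cond_true] <;>
      constructor <;> linarith [hT.1, hT.2]

lemma G2_mem (u : List Bool) : 0 ≤ G2 u ∧ G2 u ≤ 1 := by
  by_cases h : u.length ≤ 1
  · simp only [G2, if_pos h]
    constructor <;> nlinarith [sq_gt, sq_lt]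
  · simp only [G2, if_neg h]
    have hW := W_mem (mid u)
    have hc4 : 0 ≤ (sq/2) * (3*sq - 4) ∧ (sq/2) * (3*sq - 4) ≤ 1 := by
      constructor <;> nlinarith [sq_gt, sq_lt]
    have hT : 0 ≤ (sq/2) * ((3*sq - 4) * W (mid u)) ∧ (sq/2) * ((3*sq - 4) * W (mid u)) ≤ 1 := by
      constructor
      · apply mul_nonneg (by nlinarith [sq_gt]) (mul_nonneg (by nlinarith [sq_gt]) hW.1)
      · calc (sq/2) * ((3*sq-4) * W (mid u)) = ((sq/2) * (3*sq-4)) * W (mid u) := by ring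
          _ ≤ 1 * 1 := mul_le_mul hc4.2 hW.2 hW.1 (by nlinarith [sq_gt, sq_lt])
          _ = 1 := by norm_num
    cases penult u <;> simp only [cmb, cond_false, cond_true] <;>
      constructor <;> linarith [hT.1, hT.2]

lemma H_mem : ∀ L : List Bool, 0 ≤ H L ∧ H L ≤ 1 := by
  have base : 0 ≤ sq - 1 ∧ sq - 1 ≤ 1 := by constructor <;> nlinarith [sq_gt, sq_lt]
  have main : ∀ n : ℕ, ∀ L : List Bool, L.length ≤ n → 0 ≤ H L ∧ H L ≤ 1 := by
    intro n
    induction n with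
    | zero =>
        intro L hL
        have : L = [] := by
          cases L
          · rfl
          · simp at hL
        subst this
        exact base
    | succ n ih =>
        intro L hL
        match L with
        | [] => exact base
        | [false] => exact base
        | [true] => exact base
        | [true, true] => exact base
        | false :: false :: t =>
            rw [H_ff]
            exact ih (false :: t) (by simp at hL ⊢; omega)
        | false :: true :: u => rw [H_ft]; exact G_mem u
        | true :: false :: u => rw [H_tf]; exact G_mem u
        | true :: true :: false :: u => rw [H_ttf]; exact G2_mem u
        | true :: true :: true :: t =>
            rw [H_ttt]
            exact ih (true :: true :: t) (by simp at hL ⊢; omega)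
  exact fun L => main L.length L le_rfl

/-! ### The harmonic function on the vertex set -/

noncomputable def hfun (x : dyadics) : ℝ := H (Classical.choose (exists_emb x))

lemma hfun_emb {L : List Bool} (hL : Valid L) : hfun (emb L) = H L := by
  obtain ⟨hV, hEq⟩ := Classical.choose_spec (exists_emb (emb L))
  exact congrArg H (emb_inj hV hL hEq)

lemma emb_ne {F G : List Bool} (hF : Valid F) (hG : Valid G) (h : F ≠ G) :
    emb F ≠ emb G := fun e => h (emb_inj hF hG e)

lemma ne_of_len {F G : List Bool} (h : F.length ≠ G.length) : F ≠ G :=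
  fun e => h (congrArg List.length e)

/-! ### Sum and cardinality helpers -/

lemma fsum2 (f : dyadics → ℝ) {a b : dyadics} (h : a ≠ b) :
    ∑ᶠ y ∈ ({a, b} : Set dyadics), f y = f a + f b := by
  rw [show ({a, b} : Set dyadics) = insert a {b} from rfl,
    finsum_mem_insert f (by simp [h]) (Set.finite_singleton b), finsum_mem_singleton]

lemma fsum3 (f : dyadics → ℝ) {a b c : dyadics} (hab : a ≠ b) (hac : a ≠ c) (hbc : b ≠ c) :
    ∑ᶠ y ∈ ({a, b, c} : Set dyadics), f y = f a + f b + f c := by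
  rw [show ({a, b, c} : Set dyadics) = insert a {b, c} from rfl,
    finsum_mem_insert f (by simp [hab, hac]) ((Set.finite_singleton c).insert b),
    fsum2 f hbc]
  ring

lemma fsum4 (f : dyadics → ℝ) {a b c d : dyadics} (hab : a ≠ b) (hac : a ≠ c) (had : a ≠ d)
    (hbc : b ≠ c) (hbd : b ≠ d) (hcd : c ≠ d) :
    ∑ᶠ y ∈ ({a, b, c, d} : Set dyadics), f y = f a + f b + f c + f d := by
  rw [show ({a, b, c, d} : Set dyadics) = insert a {b, c, d} from rfl,
    finsum_mem_insert f (by simp [hab, hac, had])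
      (((Set.finite_singleton d).insert c).insert b),
    fsum3 f hbc hbd hcd]
  ring

lemma ncard3 {a b c : dyadics} (hab : a ≠ b) (hac : a ≠ c) (hbc : b ≠ c) :
    ({a, b, c} : Set dyadics).ncard = 3 := by
  rw [Set.ncard_insert_of_notMem (by simp [hab, hac]), Set.ncard_pair hbc]

lemma ncard4 {a b c d : dyadics} (hab : a ≠ b) (hac : a ≠ c) (had : a ≠ d)
    (hbc : b ≠ c) (hbd : b ≠ d) (hcd : c ≠ d) :
    ({a, b, c, d} : Set dyadics).ncard = 4 := by
  rw [Set.ncard_insert_of_notMem (by simp [hab, hac, had]), ncard3 hbc hbd hcd]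

/-! ### Degree harness lemmas -/

def Goal (L : List Bool) : Prop :=
  hfun (emb L) * ((schreier.neighborSet (emb L)).ncard : ℝ) =
    ∑ᶠ y ∈ schreier.neighborSet (emb L), hfun y

lemma harm2a {L n1 n2 : List Bool} (hL : Valid L) (h1 : Valid n1) (h2 : Valid n2)
    (ea : amapL L = n1) (eb : bmapL L = L) (eai : ainvL L = n2) (ebi : binvL L = L)
    (d12 : n1 ≠ n2) (dL1 : n1 ≠ L) (dL2 : n2 ≠ L)
    (hid : H L * 2 = H n1 + H n2) : Goal L := by
  have hset : schreier.neighborSet (emb L) = {emb n1, emb n2} := by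
    rw [neighborSet_eq hL]
    ext y
    simp only [Set.mem_setOf_eq, Set.mem_insert_iff, Set.mem_singleton_iff]
    constructor
    · rintro ⟨F, hF, rfl, hne, (rfl | rfl | rfl | rfl)⟩
      · exact Or.inl (congrArg emb ea)
      · exact absurd eb hne
      · exact Or.inr (congrArg emb eai)
      · exact absurd ebi hne
    · rintro (rfl | rfl)
      · exact ⟨n1, h1, rfl, dL1, Or.inl ea.symm⟩
      · exact ⟨n2, h2, rfl, dL2, Or.inr (Or.inr (Or.inl eai.symm))⟩
  have hne12 := emb_ne h1 h2 d12
  rw [Goal, hset, Set.ncard_pair hne12, fsum2 hfun hne12,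
    hfun_emb hL, hfun_emb h1, hfun_emb h2]
  push_cast
  linarith [hid]

lemma harm2b {L n1 n2 : List Bool} (hL : Valid L) (h1 : Valid n1) (h2 : Valid n2)
    (ea : amapL L = n1) (eb : bmapL L = n1) (eai : ainvL L = n2) (ebi : binvL L = n2)
    (d12 : n1 ≠ n2) (dL1 : n1 ≠ L) (dL2 : n2 ≠ L)
    (hid : H L * 2 = H n1 + H n2) : Goal L := by
  have hset : schreier.neighborSet (emb L) = {emb n1, emb n2} := by
    rw [neighborSet_eq hL]
    ext y
    simp only [Set.mem_setOf_eq, Set.mem_insert_iff, Set.mem_singleton_iff]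
    constructor
    · rintro ⟨F, hF, rfl, hne, (rfl | rfl | rfl | rfl)⟩
      · exact Or.inl (congrArg emb ea)
      · exact Or.inl (congrArg emb eb)
      · exact Or.inr (congrArg emb eai)
      · exact Or.inr (congrArg emb ebi)
    · rintro (rfl | rfl)
      · exact ⟨n1, h1, rfl, dL1, Or.inl ea.symm⟩
      · exact ⟨n2, h2, rfl, dL2, Or.inr (Or.inr (Or.inl eai.symm))⟩
  have hne12 := emb_ne h1 h2 d12
  rw [Goal, hset, Set.ncard_pair hne12, fsum2 hfun hne12,
    hfun_emb hL, hfun_emb h1, hfun_emb h2]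
  push_cast
  linarith [hid]

lemma harm3 {L n1 n2 n3 : List Bool} (hL : Valid L)
    (h1 : Valid n1) (h2 : Valid n2) (h3 : Valid n3)
    (ea : amapL L = n1) (eb : bmapL L = n2) (eai : ainvL L = n3) (ebi : binvL L = n3)
    (d12 : n1 ≠ n2) (d13 : n1 ≠ n3) (d23 : n2 ≠ n3)
    (dL1 : n1 ≠ L) (dL2 : n2 ≠ L) (dL3 : n3 ≠ L)
    (hid : H L * 3 = H n1 + H n2 + H n3) : Goal L := by
  have hset : schreier.neighborSet (emb L) = {emb n1, emb n2, emb n3} := by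
    rw [neighborSet_eq hL]
    ext y
    simp only [Set.mem_setOf_eq, Set.mem_insert_iff, Set.mem_singleton_iff]
    constructor
    · rintro ⟨F, hF, rfl, hne, (rfl | rfl | rfl | rfl)⟩
      · exact Or.inl (congrArg emb ea)
      · exact Or.inr (Or.inl (congrArg emb eb))
      · exact Or.inr (Or.inr (congrArg emb eai))
      · exact Or.inr (Or.inr (congrArg emb ebi))
    · rintro (rfl | rfl | rfl)
      · exact ⟨n1, h1, rfl, dL1, Or.inl ea.symm⟩
      · exact ⟨n2, h2, rfl, dL2, Or.inr (Or.inl eb.symm)⟩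
      · exact ⟨n3, h3, rfl, dL3, Or.inr (Or.inr (Or.inl eai.symm))⟩
  have e12 := emb_ne h1 h2 d12
  have e13 := emb_ne h1 h3 d13
  have e23 := emb_ne h2 h3 d23
  rw [Goal, hset, ncard3 e12 e13 e23, fsum3 hfun e12 e13 e23,
    hfun_emb hL, hfun_emb h1, hfun_emb h2, hfun_emb h3]
  push_cast
  linarith [hid]

lemma harm4 {L n1 n2 n3 n4 : List Bool} (hL : Valid L)
    (h1 : Valid n1) (h2 : Valid n2) (h3 : Valid n3) (h4 : Valid n4)
    (ea : amapL L = n1) (eb : bmapL L = n2) (eai : ainvL L = n3) (ebi : binvL L = n4)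
    (d12 : n1 ≠ n2) (d13 : n1 ≠ n3) (d14 : n1 ≠ n4)
    (d23 : n2 ≠ n3) (d24 : n2 ≠ n4) (d34 : n3 ≠ n4)
    (dL1 : n1 ≠ L) (dL2 : n2 ≠ L) (dL3 : n3 ≠ L) (dL4 : n4 ≠ L)
    (hid : H L * 4 = H n1 + H n2 + H n3 + H n4) : Goal L := by
  have hset : schreier.neighborSet (emb L) = {emb n1, emb n2, emb n3, emb n4} := by
    rw [neighborSet_eq hL]
    ext y
    simp only [Set.mem_setOf_eq, Set.mem_insert_iff, Set.mem_singleton_iff]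
    constructor
    · rintro ⟨F, hF, rfl, hne, (rfl | rfl | rfl | rfl)⟩
      · exact Or.inl (congrArg emb ea)
      · exact Or.inr (Or.inl (congrArg emb eb))
      · exact Or.inr (Or.inr (Or.inl (congrArg emb eai)))
      · exact Or.inr (Or.inr (Or.inr (congrArg emb ebi)))
    · rintro (rfl | rfl | rfl | rfl)
      · exact ⟨n1, h1, rfl, dL1, Or.inl ea.symm⟩
      · exact ⟨n2, h2, rfl, dL2, Or.inr (Or.inl eb.symm)⟩
      · exact ⟨n3, h3, rfl, dL3, Or.inr (Or.inr (Or.inl eai.symm))⟩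
      · exact ⟨n4, h4, rfl, dL4, Or.inr (Or.inr (Or.inr ebi.symm))⟩
  have e12 := emb_ne h1 h2 d12
  have e13 := emb_ne h1 h3 d13
  have e14 := emb_ne h1 h4 d14
  have e23 := emb_ne h2 h3 d23
  have e24 := emb_ne h2 h4 d24
  have e34 := emb_ne h3 h4 d34
  rw [Goal, hset, ncard4 e12 e13 e14 e23 e24 e34, fsum4 hfun e12 e13 e14 e23 e24 e34,
    hfun_emb hL, hfun_emb h1, hfun_emb h2, hfun_emb h3, hfun_emb h4]
  push_cast
  linarith [hid]

/-! ### Verification of harmonicity, shape by shape -/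

lemma valid_bad_pair : ¬ Valid [true, false] := by simp [Valid, List.getLast?]
lemma valid_bad_single : ¬ Valid [false] := by simp [Valid, List.getLast?]
lemma valid_bad_nil : ¬ Valid ([] : List Bool) := by simp [Valid]

lemma valid_single_true {c : Bool} (h : Valid [c]) : c = true := by
  simpa [Valid, List.getLast?] using h

lemma goal_all (L : List Bool) (hL : Valid L) : Goal L := by
  match L, hL with
  | [], h => exact absurd h valid_bad_nil
  | [false], h => exact absurd h valid_bad_single
  | [true, false], h => exact absurd h valid_bad_pair
  | [true], _ =>
      -- x = 1/2
      refine harm2a valid_singleton (valid_singleton.cons false) (valid_singleton.cons true)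
        rfl rfl rfl rfl (by simp) (by simp) (by simp) ?_
      rw [H_one, H_ft, G_nil, H_two]; ring
  | [false, true], _ =>
      -- x = 1/4
      refine harm2a (valid_singleton.cons false) ((valid_singleton.cons false).cons false)
        valid_singleton rfl rfl rfl rfl (by simp) (by simp) (by simp) ?_
      rw [H_ff, H_ft, G_nil, H_one]; ring
  | false :: false :: t, hL =>
      -- x ∈ (0, 1/4], generic ray to 0
      have hft : Valid (false :: t) := hL.of_cons (by simp)
      refine harm2a hL ((hft.cons false).cons false) hft rfl rfl rfl rfl
        (ne_of_len (by simp only [List.length_cons]; omega)) (ne_of_len (by simp only [List.length_cons]; omega)) (ne_of_len (by simp only [List.length_cons]; omega)) ?_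
      simp only [H_ff]; ring
  | false :: true :: c :: u', hL =>
      -- x ∈ (1/4, 1/2)
      have htcu : Valid (true :: c :: u') := hL.of_cons (by simp)
      have hcu : Valid (c :: u') := htcu.of_cons (by simp)
      refine harm2a hL ((htcu.cons false).cons false) ((hcu.cons false).cons true)
        rfl rfl rfl rfl (by simp) (ne_of_len (by simp only [List.length_cons]; omega)) (by simp) ?_
      simp only [H_ff, H_ft, H_tf]; ring
  | [true, false, true], _ =>
      -- x = 5/8
      have h1 : Valid [true] := valid_singleton
      refine harm4 ((h1.cons false).cons true)
        ((h1.cons true).cons false)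
        (((h1.cons false).cons false).cons true)
        (((h1.cons false).cons true).cons true)
        (h1.cons true)
        rfl rfl rfl rfl
        (by simp) (by simp) (by simp) (by simp) (by simp) (by simp)
        (by simp) (by simp) (by simp) (by simp) ?_
      simpa only [H_tf, H_ft, H_ttf] using idD
  | true :: false :: false :: v', hL =>
      -- x ∈ (1/2, 5/8), generic
      have h0 : Valid (false :: false :: v') := hL.of_cons (by simp)
      have hfv : Valid (false :: v') := h0.of_cons (by simp)
      have hv : Valid v' := hfv.of_cons (valid_cons_false hfv)
      refine harm4 hL
        ((hfv.cons true).cons false)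
        (((hfv.cons false).cons false).cons true)
        ((h0.cons true).cons true)
        ((hv.cons false).cons true)
        rfl rfl rfl rfl
        (by simp) (by simp) (by simp) (by simp)
        (ne_of_len (by simp only [List.length_cons]; omega)) (ne_of_len (by simp only [List.length_cons]; omega))
        (by simp) (ne_of_len (by simp only [List.length_cons]; omega)) (by simp) (ne_of_len (by simp only [List.length_cons]; omega)) ?_
      simp only [H_tf, H_ft, H_ttf]
      rcases v' with _ | ⟨c, _ | ⟨d, w⟩⟩
      · exact absurd rfl hv.ne_nil
      · have hc := valid_single_true hv; subst hc; exact idE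
      · exact idA (c :: d :: w) (by simp)
  | true :: false :: true :: c :: u', hL =>
      -- x ∈ (5/8, 3/4), generic
      have h0 : Valid (true :: c :: u') := (hL.of_cons (by simp)).of_cons (by simp)
      have hcu : Valid (c :: u') := h0.of_cons (by simp)
      refine harm4 hL
        ((h0.cons true).cons false)
        (((h0.cons false).cons false).cons true)
        (((h0.cons false).cons true).cons true)
        (((hcu.cons false).cons true).cons true)
        rfl rfl rfl rfl
        (by simp) (by simp) (by simp) (by simp)
        (ne_of_len (by simp only [List.length_cons]; omega)) (ne_of_len (by simp only [List.length_cons]; omega))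
        (by simp) (ne_of_len (by simp only [List.length_cons]; omega)) (by simp) (by simp) ?_
      simp only [H_tf, H_ft, H_ttf]
      rcases u' with _ | ⟨d, w⟩
      · have hc := valid_single_true hcu; subst hc; exact idF
      · exact idB (c :: d :: w) (by simp)
  | [true, true], _ =>
      -- x = 3/4
      have h1 : Valid [true] := valid_singleton
      refine harm3 (h1.cons true) h1 ((h1.cons false).cons true)
        ((h1.cons true).cons true)
        rfl rfl rfl rfl
        (by simp) (by simp) (by simp) (by simp) (by simp) (by simp) ?_
      simp only [H_ttt, H_two, H_one, H_tf, G_single]; try ring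
  | true :: true :: false :: u, hL =>
      -- x ∈ (3/4, 7/8), generic
      have hfu : Valid (false :: u) := (hL.of_cons (by simp)).of_cons (by simp)
      have hu : Valid u := hfu.of_cons (valid_cons_false hfu)
      refine harm3 hL (hfu.cons true) ((hu.cons true).cons false |>.cons true)
        ((hfu.cons true).cons true |>.cons true)
        rfl rfl rfl rfl
        (ne_of_len (by simp only [List.length_cons]; omega)) (ne_of_len (by simp only [List.length_cons]; omega)) (ne_of_len (by simp only [List.length_cons]; omega))
        (ne_of_len (by simp only [List.length_cons]; omega)) (by simp) (ne_of_len (by simp only [List.length_cons]; omega)) ?_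
      simp only [H_ttf, H_tf, H_ttt]
      rcases u with _ | ⟨c, _ | ⟨d, w⟩⟩
      · exact absurd rfl hu.ne_nil
      · have hc := valid_single_true hu; subst hc; exact idG
      · exact idC (c :: d :: w) (by simp)
  | [true, true, true], _ =>
      -- x = 7/8
      have h1 : Valid [true] := valid_singleton
      refine harm2b ((h1.cons true).cons true) (h1.cons true)
        (((h1.cons true).cons true).cons true)
        rfl rfl rfl rfl (by simp) (by simp) (by simp) ?_
      simp only [H_ttt, H_two]; try ring
  | true :: true :: true :: c :: t', hL =>
      -- x ∈ (7/8, 1), generic ray to 1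
      have hct : Valid (c :: t') := ((hL.of_cons (by simp)).of_cons (by simp)).of_cons (by simp)
      have h1 : Valid (true :: true :: c :: t') := (hct.cons true).cons true
      refine harm2b hL h1 (hL.cons true)
        rfl rfl rfl rfl
        (ne_of_len (by simp only [List.length_cons]; omega)) (ne_of_len (by simp only [List.length_cons]; omega)) (ne_of_len (by simp only [List.length_cons]; omega)) ?_
      simp only [H_ttt]; ring

end Sch

open Sch in
theorem schreier_nonconstant_bounded_harmonic :
    ∃ h : dyadics → ℝ, (∃ M : ℝ, ∀ x, |h x| ≤ M) ∧ (∃ x y, h x ≠ h y) ∧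
      ∀ x, h x * ((schreier.neighborSet x).ncard : ℝ) = ∑ᶠ y ∈ schreier.neighborSet x, h y := by
  refine ⟨hfun, ⟨1, fun x => ?_⟩, ?_, fun x => ?_⟩
  · obtain ⟨L, hL, rfl⟩ := exists_emb x
    rw [hfun_emb hL]
    rw [abs_le]
    have := H_mem L
    constructor <;> linarith [this.1, this.2]
  · refine ⟨emb [true], emb [true, false, false, true], ?_⟩
    have h2 : Valid [true, false, false, true] :=
      ((valid_singleton.cons false).cons false).cons true
    rw [hfun_emb valid_singleton, hfun_emb h2, H_one, H_tf, G_pair]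
    simp only [cmb, cond_false]
    intro h
    have hsq : sq = 3/2 := by linarith
    have := sq_sq
    rw [hsq] at this
    norm_num at this
  · obtain ⟨L, hL, rfl⟩ := exists_emb x
    exact goal_all L hL
end

section
/- For every natural number n, the number of vertices of the Schreier graph 𝓗 at graph distance at most n from the vertex 1/2 equals Fib(n+4) − 2, where Fib denotes the Fibonacci numbers (with Fib(1) = Fib(2) = 1); equivalently, |B(1/2, n)| = (φ^{n+3} − φ^2)/(√5·(φ − 1)) − (ψ^{n+3} − ψ^2)/(√5·(ψ − 1)), where φ = (1+√5)/2 and ψ = (1−√5)/2. -/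
open SimpleGraph

/-- real value of a word: `x = 0.w1` -/
noncomputable def wr : List Bool → ℝ
  | [] => 1/2
  | b :: u => ((if b then 1 else 0) + wr u)/2

lemma wr_mem : ∀ w, 0 < wr w ∧ wr w < 1 := by
  intro w
  induction w with
  | nil => norm_num [wr]
  | cons b u ih => cases b <;> simp only [wr] <;> constructor <;> simp <;> linarith [ih.1, ih.2]

lemma wr_false (u : List Bool) : wr (false :: u) = wr u / 2 := by simp [wr]
lemma wr_true (u : List Bool) : wr (true :: u) = (1 + wr u) / 2 := by simp [wr]

lemma wr_false_mem (u : List Bool) : 0 < wr (false :: u) ∧ wr (false :: u) < 1/2 := by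
  rw [wr_false]; constructor <;> linarith [(wr_mem u).1, (wr_mem u).2]

lemma wr_true_mem (u : List Bool) : 1/2 < wr (true :: u) ∧ wr (true :: u) < 1 := by
  rw [wr_true]; constructor <;> linarith [(wr_mem u).1, (wr_mem u).2]

lemma wr_inj : Function.Injective wr := by
  intro u
  induction u with
  | nil =>
    intro v h
    cases v with
    | nil => rfl
    | cons b u =>
      exfalso; cases b
      · have := (wr_false_mem u).2; rw [← h] at this; norm_num [wr] at this
      · have := (wr_true_mem u).1; rw [← h] at this; norm_num [wr] at this
  | cons b u ih =>
    intro v h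
    cases v with
    | nil =>
      exfalso; cases b
      · have := (wr_false_mem u).2; rw [h] at this; norm_num [wr] at this
      · have := (wr_true_mem u).1; rw [h] at this; norm_num [wr] at this
    | cons c v =>
      cases b <;> cases c
      · rw [wr_false, wr_false] at h; rw [ih (by linarith)]
      · exfalso
        have h1 := (wr_false_mem u).2; have h2 := (wr_true_mem v).1; rw [h] at h1; linarith
      · exfalso
        have h1 := (wr_true_mem u).1; have h2 := (wr_false_mem v).2; rw [h] at h1; linarith
      · rw [wr_true, wr_true] at h; rw [ih (by linarith)]

lemma wr_dyadic (w : List Bool) : wr w ∈ dyadics := by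
  refine ⟨?_, (wr_mem w).1, (wr_mem w).2⟩
  induction w with
  | nil => exact ⟨1, 1, one_pos, one_pos, by norm_num [wr]⟩
  | cons b u ih =>
    obtain ⟨k, m, hk, hm, h⟩ := ih
    refine ⟨(if b then 2^m else 0) + k, m + 1, by positivity, by omega, ?_⟩
    cases b
    · simp only [wr, h]; push_cast; ring
    · simp only [wr, h]; push_cast
      rw [div_eq_div_iff (by norm_num) (by positivity)]
      field_simp
      ring

/-- word action of A -/
def Aw : List Bool → List Bool
  | [] => [false]
  | false :: u => false :: false :: u
  | [true] => []
  | true :: false :: u => false :: true :: u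
  | true :: true :: u => true :: u

/-- word action of B -/
def Bw : List Bool → List Bool
  | [] => []
  | false :: u => false :: u
  | [true] => [true, false]
  | true :: false :: u => true :: false :: false :: u
  | [true, true] => [true]
  | true :: true :: false :: u => true :: false :: true :: u
  | true :: true :: true :: u => true :: true :: u

lemma Amap_wr : ∀ w, Amap (wr w) = wr (Aw w) := by
  intro w
  match w with
  | [] => norm_num [Amap, Aw, wr]
  | false :: u =>
    have h := wr_false_mem u
    rw [Amap, if_pos (by linarith [h.2]), Aw]; simp [wr]
  | [true] => norm_num [Amap, Aw, wr]
  | true :: false :: u =>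
    have h := wr_false_mem u
    have h1 : wr (true :: false :: u) = (1 + wr (false :: u))/2 := wr_true _
    rw [Amap, if_neg (by rw [h1]; linarith [h.1]), if_pos (by rw [h1]; linarith [h.2]), Aw]
    simp [wr]; ring
  | true :: true :: u =>
    have h := wr_true_mem u
    have h1 : wr (true :: true :: u) = (1 + wr (true :: u))/2 := wr_true _
    rw [Amap, if_neg (by rw [h1]; linarith [h.1]), if_neg (by rw [h1]; push_neg; linarith [h.1]), Aw]
    simp [wr]; ring

lemma Bmap_wr : ∀ w, Bmap (wr w) = wr (Bw w) := by
  intro w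
  match w with
  | [] => norm_num [Bmap, Bw, wr]
  | false :: u =>
    have h := wr_false_mem u
    rw [Bmap, if_pos (by linarith [h.2]), Bw]
  | [true] => norm_num [Bmap, Bw, wr]
  | true :: false :: u =>
    have h := wr_false_mem u
    have h1 : wr (true :: false :: u) = (1 + wr (false :: u))/2 := wr_true _
    rw [Bmap, if_neg (by rw [h1]; linarith [h.1]), if_pos (by rw [h1]; linarith [h.2]), Bw]
    simp [wr]; ring
  | [true, true] => norm_num [Bmap, Bw, wr]
  | true :: true :: false :: u =>
    have h := wr_false_mem u
    have h2 : wr (true :: false :: u) = (1 + wr (false :: u))/2 := wr_true _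
    have h1 : wr (true :: true :: false :: u) = (1 + wr (true :: false :: u))/2 := wr_true _
    rw [Bmap, if_neg (by rw [h1, h2]; linarith [h.1]), if_neg (by rw [h1, h2]; push_neg; linarith [h.1]),
      if_pos (by rw [h1, h2]; linarith [h.2]), Bw]
    simp [wr]; ring
  | true :: true :: true :: u =>
    have h := wr_true_mem u
    have h2 : wr (true :: true :: u) = (1 + wr (true :: u))/2 := wr_true _
    have h1 : wr (true :: true :: true :: u) = (1 + wr (true :: true :: u))/2 := wr_true _
    rw [Bmap, if_neg (by rw [h1, h2]; linarith [h.1]), if_neg (by rw [h1, h2]; push_neg; linarith [h.1]),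
      if_neg (by rw [h1, h2]; push_neg; linarith [h.1]), Bw]
    simp [wr]; ring

/-- number of `true`s -/
def ones : List Bool → ℕ
  | [] => 0
  | b :: u => (if b then 1 else 0) + ones u

/-- number of `true`s after the first `false` -/
def ext : List Bool → ℕ
  | [] => 0
  | true :: u => ext u
  | false :: u => ones u

def gwt (w : List Bool) : ℕ := w.length + ones w
def dwt (w : List Bool) : ℕ := w.length + ext w

lemma gwt_false (u : List Bool) : gwt (false :: u) = 1 + gwt u := by
  simp [gwt, ones]; omega
lemma gwt_true (u : List Bool) : gwt (true :: u) = 2 + gwt u := by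
  simp [gwt, ones]; omega
lemma dwt_false (u : List Bool) : dwt (false :: u) = 1 + gwt u := by
  simp [dwt, ext, gwt]; omega
lemma dwt_true (u : List Bool) : dwt (true :: u) = 1 + dwt u := by
  simp [dwt, ext]; omega

lemma dwt_eq_zero {w : List Bool} (h : dwt w = 0) : w = [] := by
  cases w with
  | nil => rfl
  | cons b u => exfalso; cases b <;> simp [dwt_false, dwt_true] at h

/-- `dwt` changes by at most one along A-edges. -/
lemma dwt_Aw (w : List Bool) : dwt (Aw w) ≤ dwt w + 1 ∧ dwt w ≤ dwt (Aw w) + 1 := by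
  match w with
  | [] => simp [Aw, dwt, ext, ones]
  | false :: u => simp [Aw, dwt_false, gwt_false]; omega
  | [true] => simp [Aw, dwt, ext, ones]
  | true :: false :: u => simp [Aw, dwt_false, dwt_true, gwt_true]; omega
  | true :: true :: u => simp [Aw, dwt_true]; omega

lemma dwt_Bw (w : List Bool) : dwt (Bw w) ≤ dwt w + 1 ∧ dwt w ≤ dwt (Bw w) + 1 := by
  match w with
  | [] => simp [Bw]
  | false :: u => simp [Bw]
  | [true] => simp [Bw, dwt, ext, ones]
  | true :: false :: u => simp [Bw, dwt_true, dwt_false, gwt_false]; omega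
  | [true, true] => simp [Bw, dwt, ext, ones]
  | true :: true :: false :: u =>
    simp [Bw, dwt_true, dwt_false, gwt_true, gwt_false]; omega
  | true :: true :: true :: u => simp [Bw, dwt_true]; omega

/-- descent: every nonempty word has a word-neighbor of smaller weight -/
lemma descent : ∀ w : List Bool, w ≠ [] →
    ∃ w', dwt w' + 1 = dwt w ∧ (w = Aw w' ∨ w = Bw w' ∨ w' = Aw w) := by
  intro w hw
  match w with
  | [false] => exact ⟨[], by simp [Aw, dwt, ext, ones], Or.inl rfl⟩
  | false :: false :: u =>
    exact ⟨false :: u, by simp [dwt_false, gwt_false]; omega, Or.inl rfl⟩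
  | false :: true :: u =>
    refine ⟨true :: false :: u, ?_, Or.inl rfl⟩
    simp [dwt_false, dwt_true, gwt_true]; omega
  | [true] => exact ⟨[], by simp [Aw, dwt, ext, ones], Or.inr (Or.inr rfl)⟩
  | true :: true :: u =>
    exact ⟨true :: u, by simp [dwt_true]; omega, Or.inr (Or.inr rfl)⟩
  | [true, false] => exact ⟨[true], by simp [Bw, dwt, ext, ones], Or.inr (Or.inl rfl)⟩
  | true :: false :: false :: u =>
    refine ⟨true :: false :: u, ?_, Or.inr (Or.inl rfl)⟩
    simp [dwt_true, dwt_false, gwt_false]; omega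
  | true :: false :: true :: u =>
    refine ⟨true :: true :: false :: u, ?_, Or.inr (Or.inl rfl)⟩
    simp [dwt_true, dwt_false, gwt_true, gwt_false]; omega

/-- The vertex `1/2` of the Schreier graph. -/
noncomputable def half : dyadics :=
  ⟨1/2, ⟨⟨1, 1, one_pos, one_pos, by norm_num⟩, by norm_num, by norm_num⟩⟩

/-- the vertex corresponding to a word -/
noncomputable def mk (w : List Bool) : dyadics := ⟨wr w, wr_dyadic w⟩

lemma mk_inj : Function.Injective mk := fun u v h => wr_inj (congrArg Subtype.val h)

lemma mk_nil : mk [] = half := by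
  apply Subtype.ext
  show wr [] = 1/2
  simp [wr]

lemma adj_iff (w w' : List Bool) : schreier.Adj (mk w) (mk w') ↔
    (w ≠ w' ∧ (w' = Aw w ∨ w' = Bw w ∨ w = Aw w' ∨ w = Bw w')) := by
  constructor
  · rintro ⟨hne, hc⟩
    refine ⟨fun h => hne (congrArg mk h), ?_⟩
    rcases hc with h | h | h | h
    · exact Or.inl (wr_inj (by rw [← Amap_wr]; exact h))
    · exact Or.inr (Or.inl (wr_inj (by rw [← Bmap_wr]; exact h)))
    · exact Or.inr (Or.inr (Or.inl (wr_inj (by rw [← Amap_wr]; exact h))))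
    · exact Or.inr (Or.inr (Or.inr (wr_inj (by rw [← Bmap_wr]; exact h))))
  · rintro ⟨hne, hc⟩
    refine ⟨fun h => hne (mk_inj h), ?_⟩
    rcases hc with h | h | h | h
    · exact Or.inl (by rw [h]; exact (Amap_wr w).symm)
    · exact Or.inr (Or.inl (by rw [h]; exact (Bmap_wr w).symm))
    · exact Or.inr (Or.inr (Or.inl (by rw [h]; exact (Amap_wr w').symm)))
    · exact Or.inr (Or.inr (Or.inr (by rw [h]; exact (Bmap_wr w').symm)))

/-- along any edge the weight changes by at most 1 -/
lemma adj_dwt {w w' : List Bool} (h : schreier.Adj (mk w) (mk w')) :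
    dwt w' ≤ dwt w + 1 := by
  rcases (adj_iff w w').mp h with ⟨-, h | h | h | h⟩
  · rw [h]; exact (dwt_Aw w).1
  · rw [h]; exact (dwt_Bw w).1
  · rw [h] at *; exact (dwt_Aw w').2
  · rw [h] at *; exact (dwt_Bw w').2

/-- there is a walk from `half` to `mk w` of length `dwt w` -/
lemma exists_walk (w : List Bool) : ∃ p : schreier.Walk half (mk w), p.length = dwt w := by
  generalize hn : dwt w = n
  induction n generalizing w with
  | zero =>
    have : w = [] := dwt_eq_zero hn
    subst this; rw [mk_nil]; exact ⟨SimpleGraph.Walk.nil, rfl⟩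
  | succ n ih =>
    have hw : w ≠ [] := by rintro rfl; simp [dwt, ext] at hn
    obtain ⟨w', hd, hc⟩ := descent w hw
    have hd' : dwt w' = n := by omega
    obtain ⟨p, hp⟩ := ih w' hd'
    have hadj : schreier.Adj (mk w') (mk w) := by
      rw [adj_iff]
      refine ⟨fun h => by rw [h] at hd; omega, ?_⟩
      tauto
    exact ⟨p.concat hadj, by simp [hp]⟩

/-- surjectivity of `mk` -/
lemma mk_surj (y : dyadics) : ∃ w, mk w = y := by
  obtain ⟨⟨k, m, hk, hm, hx⟩, h0, h1⟩ := y.2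
  suffices h : ∀ (m k : ℕ) (x : ℝ), 0 < k → x = (k : ℝ)/2^m → 0 < x → x < 1 →
      ∃ w, wr w = x by
    obtain ⟨w, hw⟩ := h m k y hk hx h0 h1
    exact ⟨w, Subtype.ext hw⟩
  clear hx h0 h1 hk hm k m
  intro m
  induction m with
  | zero =>
    intro k x hk hx h0 h1
    exfalso
    rw [pow_zero, div_one] at hx
    have : (1 : ℝ) ≤ k := by exact_mod_cast hk
    linarith
  | succ m ih =>
    intro k x hk hx h0 h1
    rcases lt_trichotomy x (1/2) with h | h | h
    · have hx2 : 2 * x = (k : ℝ)/2^m := by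
        rw [hx, pow_succ]; field_simp
      obtain ⟨w, hw⟩ := ih k (2*x) hk hx2 (by linarith) (by linarith)
      exact ⟨false :: w, by rw [wr_false, hw]; ring⟩
    · exact ⟨[], by rw [h]; rfl⟩
    · have hk2 : 2^m < k := by
        have h2 : (0:ℝ) < 2^(m+1) := by positivity
        rw [hx, lt_div_iff₀ h2] at h
        rw [pow_succ] at h
        have h3 : (2:ℝ)^m < k := by linarith
        exact_mod_cast h3
      have hx2 : 2 * x - 1 = ((k - 2^m : ℕ) : ℝ)/2^m := by
        push_cast [Nat.cast_sub hk2.le]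
        rw [hx, pow_succ]
        field_simp
      obtain ⟨w, hw⟩ := ih (k - 2^m) (2*x - 1) (by omega) hx2 (by linarith) (by linarith)
      exact ⟨true :: w, by rw [wr_true, hw]; ring⟩

lemma dwt_le_walk : ∀ (w w' : List Bool) (p : schreier.Walk (mk w) (mk w')),
    dwt w' ≤ dwt w + p.length := by
  have key : ∀ (y z : dyadics) (p : schreier.Walk y z) (w w' : List Bool),
      y = mk w → z = mk w' → dwt w' ≤ dwt w + p.length := by
    intro y z p
    induction p with
    | nil =>
      intro w w' hy hz
      rw [hy] at hz
      rw [mk_inj hz]; simp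
    | @cons a b c h p ih =>
      intro w w' hy hz
      obtain ⟨wb, hwb⟩ := mk_surj b
      have h1 : dwt wb ≤ dwt w + 1 := adj_dwt (by rw [hy, ← hwb] at h; exact h)
      have h2 := ih wb w' hwb.symm hz
      simp only [SimpleGraph.Walk.length_cons]
      omega
  intro w w' p; exact key _ _ p w w' rfl rfl

/-- the main distance formula -/
lemma dist_eq (w : List Bool) : schreier.dist half (mk w) = dwt w := by
  obtain ⟨p, hp⟩ := exists_walk w
  have hle : schreier.dist half (mk w) ≤ dwt w := hp ▸ SimpleGraph.dist_le p
  have hreach : schreier.Reachable half (mk w) := ⟨p⟩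
  obtain ⟨q, hq⟩ := hreach.exists_walk_length_eq_dist
  have h2 := dwt_le_walk [] w (q.copy mk_nil.symm rfl)
  rw [SimpleGraph.Walk.length_copy] at h2
  have hnil : dwt [] = 0 := rfl
  omega

/-! ### Counting -/

lemma gwt_le_zero {w : List Bool} (h : gwt w ≤ 0) : w = [] := by
  cases w with
  | nil => rfl
  | cons b u => exfalso; cases b <;> simp [gwt_false, gwt_true] at h

lemma Sg_zero : {w : List Bool | gwt w ≤ 0} = {[]} := by
  ext w
  simp only [Set.mem_setOf_eq, Set.mem_singleton_iff]
  exact ⟨gwt_le_zero, fun h => by subst h; simp [gwt, ones]⟩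

lemma Sg_one : {w : List Bool | gwt w ≤ 1} = {[], [false]} := by
  ext w
  simp only [Set.mem_setOf_eq, Set.mem_insert_iff, Set.mem_singleton_iff]
  constructor
  · intro h
    match w with
    | [] => exact Or.inl rfl
    | false :: u =>
      rw [gwt_false] at h
      have := gwt_le_zero (w := u) (by omega)
      subst this; exact Or.inr rfl
    | true :: u => rw [gwt_true] at h; omega
  · rintro (rfl | rfl) <;> simp [gwt, ones]

lemma Sg_rec (n : ℕ) : {w : List Bool | gwt w ≤ n + 2} =
    insert [] ((false :: ·) '' {w | gwt w ≤ n + 1} ∪ (true :: ·) '' {w | gwt w ≤ n}) := by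
  ext w
  simp only [Set.mem_setOf_eq, Set.mem_insert_iff, Set.mem_union, Set.mem_image]
  constructor
  · intro h
    match w with
    | [] => exact Or.inl rfl
    | false :: u =>
      rw [gwt_false] at h
      exact Or.inr (Or.inl ⟨u, by omega, rfl⟩)
    | true :: u =>
      rw [gwt_true] at h
      exact Or.inr (Or.inr ⟨u, by omega, rfl⟩)
  · rintro (rfl | ⟨u, hu, rfl⟩ | ⟨u, hu, rfl⟩)
    · simp [gwt, ones]
    · rw [gwt_false]; omega
    · rw [gwt_true]; omega

lemma Sd_zero : {w : List Bool | dwt w ≤ 0} = {[]} := by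
  ext w
  simp only [Set.mem_setOf_eq, Set.mem_singleton_iff]
  exact ⟨fun h => dwt_eq_zero (by omega), fun h => by subst h; simp [dwt, ext]⟩

lemma Sd_rec (n : ℕ) : {w : List Bool | dwt w ≤ n + 1} =
    insert [] ((true :: ·) '' {w | dwt w ≤ n} ∪ (false :: ·) '' {w | gwt w ≤ n}) := by
  ext w
  simp only [Set.mem_setOf_eq, Set.mem_insert_iff, Set.mem_union, Set.mem_image]
  constructor
  · intro h
    match w with
    | [] => exact Or.inl rfl
    | true :: u =>
      rw [dwt_true] at h
      exact Or.inr (Or.inl ⟨u, by omega, rfl⟩)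
    | false :: u =>
      rw [dwt_false] at h
      exact Or.inr (Or.inr ⟨u, by omega, rfl⟩)
  · rintro (rfl | ⟨u, hu, rfl⟩ | ⟨u, hu, rfl⟩)
    · simp [dwt, ext]
    · rw [dwt_true]; omega
    · rw [dwt_false]; omega

lemma Sg_finite (n : ℕ) : {w : List Bool | gwt w ≤ n}.Finite :=
  Set.Finite.subset (List.finite_length_le (α := Bool) (n := n)) (fun w hw => by
    simp only [Set.mem_setOf_eq, gwt] at *; omega)

lemma Sd_finite (n : ℕ) : {w : List Bool | dwt w ≤ n}.Finite :=
  Set.Finite.subset (List.finite_length_le (α := Bool) (n := n)) (fun w hw => by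
    simp only [Set.mem_setOf_eq, dwt] at *; omega)

/-- cardinality of a set of the `insert [] (cons b '' S1 ∪ cons b' '' S2)` shape -/
lemma card_step {S1 S2 : Set (List Bool)} (h1 : S1.Finite) (h2 : S2.Finite) :
    (insert ([] : List Bool) ((true :: ·) '' S1 ∪ (false :: ·) '' S2)).ncard =
      1 + S1.ncard + S2.ncard := by
  have hi1 : ((true :: ·) '' S1).Finite := h1.image _
  have hi2 : ((false :: ·) '' S2).Finite := h2.image _
  have hne : ([] : List Bool) ∉ (true :: ·) '' S1 ∪ (false :: ·) '' S2 := by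
    rintro (⟨u, -, h⟩ | ⟨u, -, h⟩) <;> simp at h
  have hdisj : Disjoint ((true :: ·) '' S1) ((false :: ·) '' S2) := by
    rw [Set.disjoint_left]
    rintro w ⟨u, -, rfl⟩ ⟨v, -, hv⟩
    simp at hv
  rw [Set.ncard_insert_of_notMem hne (hi1.union hi2),
    Set.ncard_union_eq hdisj hi1 hi2,
    Set.ncard_image_of_injective _ (List.cons_injective),
    Set.ncard_image_of_injective _ (List.cons_injective)]
  omega

lemma card_step' {S1 S2 : Set (List Bool)} (h1 : S1.Finite) (h2 : S2.Finite) :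
    (insert ([] : List Bool) ((false :: ·) '' S1 ∪ (true :: ·) '' S2)).ncard =
      1 + S1.ncard + S2.ncard := by
  have hi1 : ((false :: ·) '' S1).Finite := h1.image _
  have hi2 : ((true :: ·) '' S2).Finite := h2.image _
  have hne : ([] : List Bool) ∉ (false :: ·) '' S1 ∪ (true :: ·) '' S2 := by
    rintro (⟨u, -, h⟩ | ⟨u, -, h⟩) <;> simp at h
  have hdisj : Disjoint ((false :: ·) '' S1) ((true :: ·) '' S2) := by
    rw [Set.disjoint_left]
    rintro w ⟨u, -, rfl⟩ ⟨v, -, hv⟩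
    simp at hv
  rw [Set.ncard_insert_of_notMem hne (hi1.union hi2),
    Set.ncard_union_eq hdisj hi1 hi2,
    Set.ncard_image_of_injective _ (List.cons_injective),
    Set.ncard_image_of_injective _ (List.cons_injective)]
  omega

lemma card_g : ∀ n : ℕ, {w : List Bool | gwt w ≤ n}.ncard + 1 = Nat.fib (n + 3) := by
  intro n
  induction n using Nat.twoStepInduction with
  | zero => rw [Sg_zero, Set.ncard_singleton]; decide
  | one =>
    rw [Sg_one]
    rw [Set.ncard_insert_of_notMem (by simp) (Set.finite_singleton _), Set.ncard_singleton]
    decide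
  | more n ih1 ih2 =>
    rw [Sg_rec n, card_step' (Sg_finite (n+1)) (Sg_finite n)]
    have hf : Nat.fib (n + 2 + 3) = Nat.fib (n + 1 + 3) + Nat.fib (n + 3) := by
      have h1 : n + 2 + 3 = (n + 3) + 2 := by omega
      rw [h1, Nat.fib_add_two]
      have h2 : n + 3 + 1 = n + 1 + 3 := by omega
      rw [h2]
      omega
    omega

lemma card_d : ∀ n : ℕ, {w : List Bool | dwt w ≤ n}.ncard + 2 = Nat.fib (n + 4) := by
  intro n
  induction n with
  | zero => rw [Sd_zero, Set.ncard_singleton]; decide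
  | succ n ih =>
    rw [Sd_rec n, card_step (Sd_finite n) (Sg_finite n)]
    have hg := card_g n
    have hf : Nat.fib (n + 1 + 4) = Nat.fib (n + 4) + Nat.fib (n + 3) := by
      have h1 : n + 1 + 4 = (n + 3) + 2 := by omega
      rw [h1, Nat.fib_add_two]
      have h2 : n + 3 + 1 = n + 4 := by omega
      rw [h2]
      omega
    omega

/-- The ball of radius `n` around `1/2` in the Schreier graph `𝓗` has exactly
`Fib (n+4) - 2` vertices; equivalently
`|B(1/2, n)| = (φ^(n+3) - φ^2)/(√5 (φ-1)) - (ψ^(n+3) - ψ^2)/(√5 (ψ-1))`. -/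
theorem schreier_ball_card (n : ℕ) :
    {y : dyadics | schreier.dist half y ≤ n}.ncard = Nat.fib (n + 4) - 2 ∧
    ({y : dyadics | schreier.dist half y ≤ n}.ncard : ℝ) =
      (((1 + Real.sqrt 5)/2) ^ (n + 3) - ((1 + Real.sqrt 5)/2) ^ 2) /
        (Real.sqrt 5 * ((1 + Real.sqrt 5)/2 - 1)) -
      (((1 - Real.sqrt 5)/2) ^ (n + 3) - ((1 - Real.sqrt 5)/2) ^ 2) /
        (Real.sqrt 5 * ((1 - Real.sqrt 5)/2 - 1)) := by
  have hball : {y : dyadics | schreier.dist half y ≤ n} = mk '' {w | dwt w ≤ n} := by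
    ext y
    simp only [Set.mem_setOf_eq, Set.mem_image]
    constructor
    · intro h
      obtain ⟨w, rfl⟩ := mk_surj y
      exact ⟨w, by rw [← dist_eq w]; exact h, rfl⟩
    · rintro ⟨w, hw, rfl⟩
      rw [dist_eq w]; exact hw
  have hfib2 : 2 ≤ Nat.fib (n + 4) := by
    have h1 : Nat.fib 3 ≤ Nat.fib (n + 4) := Nat.fib_mono (by omega)
    simpa [show Nat.fib 3 = 2 by decide] using h1
  have hcard : {y : dyadics | schreier.dist half y ≤ n}.ncard = Nat.fib (n + 4) - 2 := by
    rw [hball, Set.ncard_image_of_injective _ mk_inj]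
    have := card_d n
    omega
  refine ⟨hcard, ?_⟩
  rw [hcard]
  have hcast : ((Nat.fib (n + 4) - 2 : ℕ) : ℝ) = (Nat.fib (n + 4) : ℝ) - 2 := by
    rw [Nat.cast_sub hfib2]; norm_num
  rw [hcast]
  have h5 : Real.sqrt 5 ≠ 0 := (Real.sqrt_pos.mpr (by norm_num)).ne'
  have hφ : ((1 + Real.sqrt 5)/2) = Real.goldenRatio := rfl
  have hψ : ((1 - Real.sqrt 5)/2) = Real.goldenConj := rfl
  have hgold : Real.goldenRatio * (Real.goldenRatio - 1) = 1 := by linear_combination Real.goldenRatio_sq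
  have hconj : Real.goldenConj * (Real.goldenConj - 1) = 1 := by linear_combination Real.goldenConj_sq
  have key : ∀ x : ℝ, x * (x - 1) = 1 →
      (x^(n+3) - x^2)/(Real.sqrt 5 * (x - 1)) = (x^(n+4) - x^3)/Real.sqrt 5 := by
    intro x hx
    have hx1 : x - 1 ≠ 0 := by
      intro h; rw [h, mul_zero] at hx; norm_num at hx
    rw [div_eq_div_iff (mul_ne_zero h5 hx1) h5]
    have hmain : (x^(n+4) - x^3) * (x - 1) = (x^(n+3) - x^2) * (x * (x - 1)) := by ring
    rw [hx, mul_one] at hmain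
    linear_combination (-Real.sqrt 5) * hmain
  rw [hφ, hψ, key _ hgold, key _ hconj]
  have h3 : (Real.goldenRatio^3 - Real.goldenConj^3)/Real.sqrt 5 = 2 := by
    have h := Real.coe_fib_eq 3
    norm_num at h
    linarith [h.symm]
  rw [Real.coe_fib_eq, ← h3]
  ring
end
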